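/- arXiv:2603.07827 — 11 statements merged into one kernel-verified Lean document; each statement's English description precedes it below -/
import Mathlib

section
/- Let d_{1,-1}, d_{-1,1}, d_{0,1} > 0 and d_{1,0} ≥ 0, and let S be the set of those steps v ∈ {(1,-1), (-1,1), (1,0), (0,1)} with d_v > 0 (this is the genus-zero step set 𝒮₁ if d_{1,0} = 0 and 𝒮₂ if d_{1,0} > 0). Let a, b > 0 satisfy a + b = ab. Then the specializations of the generating function of weighted quadrant walks with interacting boundaries are rational: in the ring of formal power series in t with coefficients in ℝ[x], (1 − ab·d_{1,-1}d_{-1,1}·t² − (a·d_{1,0}·t + ab·d_{1,-1}d_{0,1}·t²)·x) · Q(x,0) = 1 − ab·d_{1,-1}d_{-1,1}·t², and in the ring of formal power series in t with coefficients in ℝ[y], (1 − ab·d_{1,-1}d_{-1,1}·t² − (b·d_{0,1}·t + ab·d_{-1,1}d_{1,0}·t²)·y) · Q(0,y) = 1 − ab·d_{1,-1}d_{-1,1}·t². -/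
/-!
Let `q n i j` be the weighted number of quadrant walks of length `n` ending at `(i, j)`; it
satisfies the one-step recurrence obtained by removing the last step. When `a + b = ab`, an
induction on `n` shows that away from the x-axis only the N and NW steps matter:
`q (n + 1) i j = b (d₀₁ q n i (j - 1) + d₋₁₁ q n (i + 1) (j - 1))` for `j > 0`. Feeding this into
the recurrence on the x-axis, where the last step is E or SE, gives a three-term recurrence in `n`
for the row polynomials `∑ᵢ q n i 0 xⁱ`, which is the identity for `Q(x, 0)`. The identity for
`Q(0, y)` follows by exchanging the two coordinates, which swaps `a` with `b` and `E, SE` with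
`N, NW`.
-/

open scoped Classical

noncomputable section

namespace Stmt0

/-- Position of the walk after steps `v 0, …, v i` (partial sum of the first `i+1` steps). -/
def psum {n : ℕ} (v : Fin n → ℤ × ℤ) (i : Fin n) : ℤ × ℤ :=
  ∑ j ∈ Finset.univ.filter (fun j => j ≤ i), v j

/-- Quadrant walks of length `n` with all steps in `S`: every partial sum has
nonnegative coordinates. -/
def quadWalks (S : Finset (ℤ × ℤ)) (n : ℕ) : Finset (Fin n → ℤ × ℤ) :=
  (Fintype.piFinset fun _ => S).filter fun v =>
    ∀ i : Fin n, 0 ≤ (psum v i).1 ∧ 0 ≤ (psum v i).2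

/-- The weight of a walk: the product of the step weights, times `a` to the number of
contacts with the x-axis, times `b` to the number of contacts with the y-axis. -/
def wt {n : ℕ} (d : ℤ × ℤ → ℝ) (a b : ℝ) (v : Fin n → ℤ × ℤ) : ℝ :=
  (∏ i, d (v i)) *
    a ^ (Finset.univ.filter fun i => (psum v i).2 = 0).card *
    b ^ (Finset.univ.filter fun i => (psum v i).1 = 0).card

/-- Endpoint of a walk. -/
def endpt {n : ℕ} (v : Fin n → ℤ × ℤ) : ℤ × ℤ := ∑ j, v j

/-- `Q(x,0)`: generating function (in `t`, with coefficients in `ℝ[x]`) of weighted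
quadrant walks ending on the x-axis, the exponent of `x` recording the abscissa of the
endpoint. -/
def Qx0 (S : Finset (ℤ × ℤ)) (d : ℤ × ℤ → ℝ) (a b : ℝ) : PowerSeries (Polynomial ℝ) :=
  PowerSeries.mk fun n =>
    ∑ v ∈ (quadWalks S n).filter (fun v => (endpt v).2 = 0),
      Polynomial.C (wt d a b v) * Polynomial.X ^ (endpt v).1.toNat

/-- `Q(0,y)`: generating function of weighted quadrant walks ending on the y-axis. -/
def Qy0 (S : Finset (ℤ × ℤ)) (d : ℤ × ℤ → ℝ) (a b : ℝ) : PowerSeries (Polynomial ℝ) :=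
  PowerSeries.mk fun n =>
    ∑ v ∈ (quadWalks S n).filter (fun v => (endpt v).1 = 0),
      Polynomial.C (wt d a b v) * Polynomial.X ^ (endpt v).2.toNat

/-- Constant (real) coefficient, viewed in `(ℝ[x])[[t]]`. -/
abbrev CC (r : ℝ) : PowerSeries (Polynomial ℝ) := PowerSeries.C (Polynomial.C r)

/-- The catalytic variable `x` (or `y`), viewed in `(ℝ[x])[[t]]`. -/
abbrev XX : PowerSeries (Polynomial ℝ) := PowerSeries.C Polynomial.X

/-- The length variable `t`. -/
abbrev T : PowerSeries (Polynomial ℝ) := PowerSeries.X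

section Walks

variable {S : Finset (ℤ × ℤ)} {d : ℤ × ℤ → ℝ} {a b : ℝ} {n : ℕ}

def walkWeight (S : Finset (ℤ × ℤ)) (d : ℤ × ℤ → ℝ) (a b : ℝ) (n : ℕ) (p : ℤ × ℤ) : ℝ :=
  ∑ v ∈ (quadWalks S n).filter (fun v => endpt v = p), wt d a b v

lemma mem_quadWalks {v : Fin n → ℤ × ℤ} :
    v ∈ quadWalks S n ↔ (∀ i, v i ∈ S) ∧ ∀ i, 0 ≤ (psum v i).1 ∧ 0 ≤ (psum v i).2 := by
  simp [quadWalks]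

lemma psum_snoc_castSucc (w : Fin n → ℤ × ℤ) (s : ℤ × ℤ) (i : Fin n) :
    psum (Fin.snoc w s : Fin (n + 1) → ℤ × ℤ) i.castSucc = psum w i := by
  simp [psum, Finset.sum_filter, Fin.sum_univ_castSucc, (Fin.castSucc_lt_last i).not_ge]

lemma psum_last (v : Fin (n + 1) → ℤ × ℤ) : psum v (Fin.last n) = endpt v := by
  simp [psum, endpt, Fin.le_last]

lemma endpt_snoc (w : Fin n → ℤ × ℤ) (s : ℤ × ℤ) :
    endpt (Fin.snoc w s : Fin (n + 1) → ℤ × ℤ) = endpt w + s := by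
  simp [endpt, Fin.sum_univ_castSucc]

lemma endpt_nonneg {v : Fin n → ℤ × ℤ} (hv : v ∈ quadWalks S n) :
    0 ≤ (endpt v).1 ∧ 0 ≤ (endpt v).2 := by
  cases n with
  | zero => simp [endpt]
  | succ n => exact psum_last v ▸ (mem_quadWalks.mp hv).2 (Fin.last n)

lemma snoc_mem_quadWalks {w : Fin n → ℤ × ℤ} {s : ℤ × ℤ} :
    (Fin.snoc w s : Fin (n + 1) → ℤ × ℤ) ∈ quadWalks S (n + 1) ↔
      w ∈ quadWalks S n ∧ s ∈ S ∧ 0 ≤ (endpt w + s).1 ∧ 0 ≤ (endpt w + s).2 := by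
  simp only [mem_quadWalks, Fin.forall_fin_succ', Fin.snoc_castSucc, Fin.snoc_last,
    psum_snoc_castSucc, psum_last, endpt_snoc]
  tauto

lemma wt_snoc (w : Fin n → ℤ × ℤ) (s : ℤ × ℤ) :
    wt d a b (Fin.snoc w s : Fin (n + 1) → ℤ × ℤ) =
      wt d a b w * d s * (if (endpt w + s).2 = 0 then a else 1) *
        (if (endpt w + s).1 = 0 then b else 1) := by
  simp only [wt, Finset.card_filter, Fin.prod_univ_castSucc, Fin.sum_univ_castSucc,
    psum_snoc_castSucc, psum_last, endpt_snoc, Fin.snoc_castSucc, Fin.snoc_last, pow_add]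
  split_ifs <;> ring

lemma walkWeight_zero (p : ℤ × ℤ) : walkWeight S d a b 0 p = if p = 0 then 1 else 0 := by
  have hwalks : quadWalks S 0 = {Fin.elim0} := by
    ext v
    simp [mem_quadWalks, Subsingleton.elim v Fin.elim0]
  simp [walkWeight, hwalks, endpt, wt, eq_comm, apply_ite]

lemma walkWeight_succ_eq_sum_snoc {p : ℤ × ℤ} (hp : 0 ≤ p.1 ∧ 0 ≤ p.2) :
    walkWeight S d a b (n + 1) p =
      ∑ sw ∈ (S ×ˢ quadWalks S n).filter (fun sw => endpt sw.2 = p - sw.1),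
        wt d a b (Fin.snoc sw.2 sw.1 : Fin (n + 1) → ℤ × ℤ) := by
  refine Finset.sum_nbij' (fun v => (v (Fin.last n), Fin.init v))
    (fun sw => Fin.snoc sw.2 sw.1) ?_ ?_ (fun _ _ => by simp) (fun _ _ => by simp)
    (fun _ _ => by simp)
  · intro v hv
    obtain ⟨hv, hend⟩ := Finset.mem_filter.mp hv
    rw [← Fin.snoc_init_self v, snoc_mem_quadWalks] at hv
    rw [← Fin.snoc_init_self v, endpt_snoc] at hend
    simp [hv, ← hend]
  · rintro ⟨s, w⟩ hsw
    obtain ⟨hsw, hend⟩ := Finset.mem_filter.mp hsw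
    obtain ⟨hs, hw⟩ := Finset.mem_product.mp hsw
    simp_all [snoc_mem_quadWalks, endpt_snoc]

lemma walkWeight_succ (p : ℤ × ℤ) :
    walkWeight S d a b (n + 1) p =
      if 0 ≤ p.1 ∧ 0 ≤ p.2 then
        (if p.2 = 0 then a else 1) * (if p.1 = 0 then b else 1) *
          ∑ s ∈ S, d s * walkWeight S d a b n (p - s)
      else 0 := by
  by_cases hp : 0 ≤ p.1 ∧ 0 ≤ p.2
  · rw [if_pos hp, walkWeight_succ_eq_sum_snoc hp, Finset.sum_filter, Finset.sum_product,
      Finset.mul_sum]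
    refine Finset.sum_congr rfl fun s _ => ?_
    rw [walkWeight, Finset.sum_filter, Finset.mul_sum, Finset.mul_sum]
    refine Finset.sum_congr rfl fun w _ => ?_
    by_cases hw : endpt w = p - s
    · rw [if_pos hw, if_pos hw, wt_snoc, hw, sub_add_cancel]
      ring
    · rw [if_neg hw, if_neg hw, mul_zero, mul_zero]
  · rw [if_neg hp]
    refine Finset.sum_eq_zero fun v hv => absurd ?_ hp
    obtain ⟨hv', rfl⟩ := Finset.mem_filter.mp hv
    exact endpt_nonneg hv'

lemma coeff_coeff_Qx0 (n k : ℕ) :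
    (PowerSeries.coeff n (Qx0 S d a b)).coeff k = walkWeight S d a b n (k, 0) := by
  simp only [Qx0, PowerSeries.coeff_mk, Polynomial.finsetSum_coeff, Polynomial.coeff_C_mul_X_pow,
    ← Finset.sum_filter, Finset.filter_filter, walkWeight]
  refine Finset.sum_congr (Finset.filter_congr fun v hv => ?_) fun _ _ => rfl
  have := (endpt_nonneg hv).1
  constructor
  · rintro ⟨h2, h1⟩; ext <;> simp <;> omega
  · intro h; simp [h]

lemma coeff_coeff_Qy0 (n k : ℕ) :
    (PowerSeries.coeff n (Qy0 S d a b)).coeff k = walkWeight S d a b n (0, k) := by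
  simp only [Qy0, PowerSeries.coeff_mk, Polynomial.finsetSum_coeff, Polynomial.coeff_C_mul_X_pow,
    ← Finset.sum_filter, Finset.filter_filter, walkWeight]
  refine Finset.sum_congr (Finset.filter_congr fun v hv => ?_) fun _ _ => rfl
  have := (endpt_nonneg hv).2
  constructor
  · rintro ⟨h1, h2⟩; ext <;> simp <;> omega
  · intro h; simp [h]

end Walks

/-- Steps are named after compass directions: `E = (1, 0)`, `N = (0, 1)`, `SE = (1, -1)` and
`NW = (-1, 1)`. -/
def quadCoeff (dE dN dSE dNW a b : ℝ) : ℕ → ℤ → ℤ → ℝ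
  | 0, i, j => if i = 0 ∧ j = 0 then 1 else 0
  | n + 1, i, j =>
    if 0 ≤ i ∧ 0 ≤ j then
      (if j = 0 then a else 1) * (if i = 0 then b else 1) *
        (dE * quadCoeff dE dN dSE dNW a b n (i - 1) j +
          dN * quadCoeff dE dN dSE dNW a b n i (j - 1) +
          dSE * quadCoeff dE dN dSE dNW a b n (i - 1) (j + 1) +
          dNW * quadCoeff dE dN dSE dNW a b n (i + 1) (j - 1))
    else 0

section QuadCoeff

variable {dE dN dSE dNW a b : ℝ} {n : ℕ} {i j : ℤ}

local notation "q" => quadCoeff dE dN dSE dNW a b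

lemma quadCoeff_of_neg (h : i < 0 ∨ j < 0) : q n i j = 0 := by
  cases n <;> rw [quadCoeff, if_neg (by omega)]

lemma quadCoeff_eq_zero_of_lt (h : (n : ℤ) < i + j) : q n i j = 0 := by
  induction n generalizing i j with
  | zero => rw [quadCoeff, if_neg (by omega)]
  | succ n ih =>
    have hvanish : ∀ i' j', i + j ≤ i' + j' + 1 → q n i' j' = 0 :=
      fun _ _ h' => ih (by push_cast at h; omega)
    rw [quadCoeff, hvanish (i - 1) j (by omega), hvanish i (j - 1) (by omega),
      hvanish (i - 1) (j + 1) (by omega), hvanish (i + 1) (j - 1) (by omega)]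
    simp

lemma quadCoeff_origin : q n 0 0 = if n = 0 then 1 else 0 := by
  cases n with
  | zero => simp [quadCoeff]
  | succ n => simp [quadCoeff, quadCoeff_of_neg]

lemma quadCoeff_succ_of_pos (hi : 0 < i) (hj : 0 < j) :
    q (n + 1) i j = dE * q n (i - 1) j + dN * q n i (j - 1) + dSE * q n (i - 1) (j + 1) +
      dNW * q n (i + 1) (j - 1) := by
  rw [quadCoeff, if_pos ⟨hi.le, hj.le⟩, if_neg hj.ne', if_neg hi.ne', one_mul, one_mul]

lemma quadCoeff_succ_xAxis (hi : 0 < i) :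
    q (n + 1) i 0 = a * (dE * q n (i - 1) 0 + dSE * q n (i - 1) 1) := by
  rw [quadCoeff, if_pos ⟨hi.le, le_rfl⟩, if_pos rfl, if_neg hi.ne',
    quadCoeff_of_neg (j := 0 - 1) (by omega), quadCoeff_of_neg (j := 0 - 1) (by omega), zero_add]
  ring

lemma quadCoeff_succ_yAxis (hj : 0 < j) :
    q (n + 1) 0 j = b * (dN * q n 0 (j - 1) + dNW * q n 1 (j - 1)) := by
  rw [quadCoeff, if_pos ⟨le_rfl, hj.le⟩, if_neg hj.ne', if_pos rfl,
    quadCoeff_of_neg (i := 0 - 1) (by omega), quadCoeff_of_neg (i := 0 - 1) (by omega), zero_add]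
  ring

lemma quadCoeff_swap : q n i j = quadCoeff dN dE dNW dSE b a n j i := by
  induction n generalizing i j with
  | zero => simp only [quadCoeff, and_comm]
  | succ n ih =>
    rw [quadCoeff, quadCoeff, ih, ih, ih, ih]
    by_cases h : 0 ≤ i ∧ 0 ≤ j
    · rw [if_pos h, if_pos h.symm]
      ring
    · rw [if_neg h, if_neg (h ∘ And.symm)]

/-- This is where `a + b = ab` enters: off the y-axis it makes the E and SE contributions to a
point above the x-axis exactly `b - 1` times the N and NW ones. -/
lemma quadCoeff_succ_of_snd_pos (hab : a + b = a * b) (hi : 0 ≤ i) (hj : 0 < j) :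
    q (n + 1) i j = b * (dN * q n i (j - 1) + dNW * q n (i + 1) (j - 1)) := by
  induction n generalizing i j with
  | zero =>
    obtain rfl | hi := hi.eq_or_lt
    · simpa using quadCoeff_succ_yAxis hj
    rw [quadCoeff_eq_zero_of_lt, quadCoeff_eq_zero_of_lt, quadCoeff_eq_zero_of_lt] <;>
      first | omega | simp
  | succ n ih =>
    obtain rfl | hi := hi.eq_or_lt
    · simpa using quadCoeff_succ_yAxis hj
    rw [quadCoeff_succ_of_pos hi hj]
    obtain rfl | hj : j = 1 ∨ 1 < j := by omega
    · rw [ih (i := i - 1) (j := 1) (by omega) one_pos,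
        ih (i := i - 1) (j := 1 + 1) (by omega) (by omega), sub_self, quadCoeff_succ_xAxis hi,
        quadCoeff_succ_xAxis (i := i + 1) (by omega)]
      simp only [sub_add_cancel, add_sub_cancel_right]
      linear_combination (dE * dN * q n (i - 1) 0 + dE * dNW * q n i 0 +
        dSE * dN * q n (i - 1) 1 + dSE * dNW * q n i 1) * hab
    · conv_lhs =>
        rw [ih (i := i - 1) (by omega) (by omega),
          ih (i := i - 1) (j := j + 1) (by omega) (by omega),
          ih (i := i) (j := j - 1) (by omega) (by omega),
          ih (i := i + 1) (j := j - 1) (by omega) (by omega)]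
      rw [quadCoeff_succ_of_pos hi (by omega),
        quadCoeff_succ_of_pos (i := i + 1) (by omega) (by omega)]
      simp only [sub_add_cancel, add_sub_cancel_right]
      ring

lemma quadCoeff_succ_succ_xAxis (hab : a + b = a * b) (hi : 0 < i) :
    q (n + 2) i 0 = a * dE * q (n + 1) (i - 1) 0 + a * b * dSE * dNW * q n i 0 +
      a * b * dSE * dN * q n (i - 1) 0 := by
  rw [quadCoeff_succ_xAxis hi, quadCoeff_succ_of_snd_pos (i := i - 1) (j := 1) hab (by omega)
    one_pos, sub_self, sub_add_cancel]
  ring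

lemma rowSeries_identity (hab : a + b = a * b) (G : PowerSeries (Polynomial ℝ))
    (hG : ∀ n k : ℕ, (PowerSeries.coeff n G).coeff k = q n k 0) :
    (1 - CC (a * b * dSE * dNW) * T ^ 2
        - (CC (a * dE) * T + CC (a * b * dSE * dN) * T ^ 2) * XX) * G
      = 1 - CC (a * b * dSE * dNW) * T ^ 2 := by
  have hG0 : ∀ k : ℕ, (PowerSeries.constantCoeff G).coeff k = q 0 k 0 := by simpa using hG 0
  ext n k
  rcases n with _ | _ | n <;> rcases k with _ | k <;>
    simp [sub_mul, add_mul, mul_assoc, PowerSeries.coeff_X_pow_mul', hG, hG0,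
      PowerSeries.coeff_one, Polynomial.coeff_one, quadCoeff_origin]
  · simp [quadCoeff]
    omega
  · rw [quadCoeff_succ_xAxis (by positivity)]
    simp [quadCoeff]
  · split_ifs <;> simp
  · rw [quadCoeff_succ_succ_xAxis hab (by positivity)]
    split_ifs <;> simp <;> ring

end QuadCoeff

lemma walkWeight_eq_quadCoeff {S : Finset (ℤ × ℤ)} {d : ℤ × ℤ → ℝ} {a b : ℝ}
    (hSE : 0 ≤ d (1, -1)) (hNW : 0 ≤ d (-1, 1)) (hN : 0 ≤ d (0, 1)) (hE : 0 ≤ d (1, 0))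
    (hS : S = ({(1, -1), (-1, 1), (1, 0), (0, 1)} : Finset (ℤ × ℤ)).filter fun v => 0 < d v)
    (n : ℕ) (p : ℤ × ℤ) :
    walkWeight S d a b n p =
      quadCoeff (d (1, 0)) (d (0, 1)) (d (1, -1)) (d (-1, 1)) a b n p.1 p.2 := by
  have hsteps (g : ℤ × ℤ → ℝ) : ∑ s ∈ S, d s * g s =
      d (1, -1) * g (1, -1) + d (-1, 1) * g (-1, 1) + d (1, 0) * g (1, 0) +
        d (0, 1) * g (0, 1) := by
    rw [hS, Finset.sum_filter_of_ne fun s hs hne => (left_ne_zero_of_mul hne).symm.lt_of_le ?_,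
      Finset.sum_insert (by decide), Finset.sum_insert (by decide), Finset.sum_insert (by decide),
      Finset.sum_singleton, ← add_assoc, ← add_assoc]
    simp only [Finset.mem_insert, Finset.mem_singleton] at hs
    rcases hs with rfl | rfl | rfl | rfl <;> assumption
  induction n generalizing p with
  | zero => simp [walkWeight_zero, quadCoeff, Prod.ext_iff]
  | succ n ih =>
    rw [walkWeight_succ, quadCoeff, hsteps, ih, ih, ih, ih]
    simp only [Prod.fst_sub, Prod.snd_sub, sub_neg_eq_add, sub_zero]
    congr 2
    ring

theorem statement0_general (d : ℤ × ℤ → ℝ) (a b : ℝ)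
    (h1 : 0 < d (1, -1)) (h2 : 0 < d (-1, 1)) (h3 : 0 < d (0, 1)) (h4 : 0 ≤ d (1, 0))
    (hab : a + b = a * b)
    (S : Finset (ℤ × ℤ))
    (hS : S = ({(1, -1), (-1, 1), (1, 0), (0, 1)} : Finset (ℤ × ℤ)).filter fun v => 0 < d v) :
    (1 - CC (a * b * d (1, -1) * d (-1, 1)) * T ^ 2
        - (CC (a * d (1, 0)) * T + CC (a * b * d (1, -1) * d (0, 1)) * T ^ 2) * XX)
        * Qx0 S d a b
      = 1 - CC (a * b * d (1, -1) * d (-1, 1)) * T ^ 2 ∧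
    (1 - CC (a * b * d (1, -1) * d (-1, 1)) * T ^ 2
        - (CC (b * d (0, 1)) * T + CC (a * b * d (-1, 1) * d (1, 0)) * T ^ 2) * XX)
        * Qy0 S d a b
      = 1 - CC (a * b * d (1, -1) * d (-1, 1)) * T ^ 2 := by
  have hW := walkWeight_eq_quadCoeff (a := a) (b := b) h1.le h2.le h3.le h4 hS
  constructor
  · refine rowSeries_identity hab _ fun n k => ?_
    rw [coeff_coeff_Qx0, hW]
  · have hba : b + a = b * a := by linear_combination hab
    have hy := rowSeries_identity hba (Qy0 S d a b) fun n k => by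
      rw [coeff_coeff_Qy0, hW, quadCoeff_swap]
    rwa [mul_comm b a, mul_right_comm _ (d (-1, 1))] at hy

theorem statement0 (d : ℤ × ℤ → ℝ) (a b : ℝ)
    (h1 : 0 < d (1, -1)) (h2 : 0 < d (-1, 1)) (h3 : 0 < d (0, 1)) (h4 : 0 ≤ d (1, 0))
    (ha : 0 < a) (hb : 0 < b) (hab : a + b = a * b)
    (S : Finset (ℤ × ℤ))
    (hS : S = ({(1, -1), (-1, 1), (1, 0), (0, 1)} : Finset (ℤ × ℤ)).filter fun v => 0 < d v) :
    (1 - CC (a * b * d (1, -1) * d (-1, 1)) * T ^ 2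
        - (CC (a * d (1, 0)) * T + CC (a * b * d (1, -1) * d (0, 1)) * T ^ 2) * XX)
        * Qx0 S d a b
      = 1 - CC (a * b * d (1, -1) * d (-1, 1)) * T ^ 2 ∧
    (1 - CC (a * b * d (1, -1) * d (-1, 1)) * T ^ 2
        - (CC (b * d (0, 1)) * T + CC (a * b * d (-1, 1) * d (1, 0)) * T ^ 2) * XX)
        * Qy0 S d a b
      = 1 - CC (a * b * d (1, -1) * d (-1, 1)) * T ^ 2 :=
  statement0_general d a b h1 h2 h3 h4 hab S hS

end Stmt0
end
end

section
/- Let S ⊆ {(1,-1), (-1,1), (1,0), (0,1), (1,1)} be a step set containing (1,-1) and (-1,1) (one of the five genus-zero step sets), with positive real weights d_v (v ∈ S) and Boltzmann weights a, b > 0; set d_{i,j} = 0 for (i,j) ∉ S, A = 1 − 1/a, B = 1 − 1/b. Then the generating function Q(x,y) of weighted quadrant walks with interacting boundaries satisfies, as an identity of formal power series in t with coefficients in ℝ[x,y]: (x·y − t·(d_{1,-1}·x² + d_{-1,1}·y² + d_{1,0}·x²y + d_{0,1}·xy² + d_{1,1}·x²y²))·Q(x,y) = (1 − A − B)·x·y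 + (A·x·y − t·d_{1,-1}·x²)·Q(x,0) + (B·x·y − t·d_{-1,1}·y²)·Q(0,y). (In particular, for these step sets Q(0,0) = 1.) -/
/-!
Cut a nonempty walk into its first `n` steps, ending at `e`, and its last step `s`. Appending `s`
multiplies the weight by `d s`, and by `a` (resp. `b`) if `e + s` lies on the x-axis (resp. y-axis).
Since every step has a positive coordinate, a nonempty walk never ends at the origin, so in
`x y (Q - A Q(x,0) - B Q(0,y))` the coefficient of `t^(n+1)` has exactly these boundary factors
divided out: it is the sum over all one-step extensions of walks of length `n`. The same sum comes
from `x y S(x,y)` times the coefficient of `t^n` in `Q`, once the only steps leaving the quadrant,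
`(1,-1)` from the x-axis and `(-1,1)` from the y-axis, are removed; they account for
`d_{1,-1} x² Q(x,0)` and `d_{-1,1} y² Q(0,y)`.
-/

open scoped Classical

noncomputable section

namespace Stmt2

/-- Position of the walk after steps `v 0, …, v i` (partial sum of the first `i+1` steps). -/
def psum {n : ℕ} (v : Fin n → ℤ × ℤ) (i : Fin n) : ℤ × ℤ :=
  ∑ j ∈ Finset.univ.filter (fun j => j ≤ i), v j

/-- Quadrant walks of length `n` with all steps in `S`. -/
def quadWalks (S : Finset (ℤ × ℤ)) (n : ℕ) : Finset (Fin n → ℤ × ℤ) :=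
  (Fintype.piFinset fun _ => S).filter fun v =>
    ∀ i : Fin n, 0 ≤ (psum v i).1 ∧ 0 ≤ (psum v i).2

/-- The weight of a walk. -/
def wt {n : ℕ} (d : ℤ × ℤ → ℝ) (a b : ℝ) (v : Fin n → ℤ × ℤ) : ℝ :=
  (∏ i, d (v i)) *
    a ^ (Finset.univ.filter fun i => (psum v i).2 = 0).card *
    b ^ (Finset.univ.filter fun i => (psum v i).1 = 0).card

/-- Endpoint of a walk. -/
def endpt {n : ℕ} (v : Fin n → ℤ × ℤ) : ℤ × ℤ := ∑ j, v j

/-- `Q(x,y)` as a power series in `t` with coefficients in `ℝ[x,y]`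
(`x = MvPolynomial.X 0`, `y = MvPolynomial.X 1`). -/
def Q (S : Finset (ℤ × ℤ)) (d : ℤ × ℤ → ℝ) (a b : ℝ) :
    PowerSeries (MvPolynomial (Fin 2) ℝ) :=
  PowerSeries.mk fun n =>
    ∑ v ∈ quadWalks S n,
      MvPolynomial.C (wt d a b v) * MvPolynomial.X 0 ^ (endpt v).1.toNat *
        MvPolynomial.X 1 ^ (endpt v).2.toNat

/-- `Q(x,0)`: the restriction of the sum to walks ending on the x-axis. -/
def Qx0 (S : Finset (ℤ × ℤ)) (d : ℤ × ℤ → ℝ) (a b : ℝ) :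
    PowerSeries (MvPolynomial (Fin 2) ℝ) :=
  PowerSeries.mk fun n =>
    ∑ v ∈ (quadWalks S n).filter (fun v => (endpt v).2 = 0),
      MvPolynomial.C (wt d a b v) * MvPolynomial.X 0 ^ (endpt v).1.toNat

/-- `Q(0,y)`: the restriction of the sum to walks ending on the y-axis. -/
def Qy0 (S : Finset (ℤ × ℤ)) (d : ℤ × ℤ → ℝ) (a b : ℝ) :
    PowerSeries (MvPolynomial (Fin 2) ℝ) :=
  PowerSeries.mk fun n =>
    ∑ v ∈ (quadWalks S n).filter (fun v => (endpt v).1 = 0),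
      MvPolynomial.C (wt d a b v) * MvPolynomial.X 1 ^ (endpt v).2.toNat

/-- Constant (real) coefficient, viewed in `(ℝ[x,y])[[t]]`. -/
abbrev CC (r : ℝ) : PowerSeries (MvPolynomial (Fin 2) ℝ) :=
  PowerSeries.C (MvPolynomial.C r)

/-- The variable `x`, viewed in `(ℝ[x,y])[[t]]`. -/
abbrev Xv : PowerSeries (MvPolynomial (Fin 2) ℝ) :=
  PowerSeries.C (MvPolynomial.X 0)

/-- The variable `y`, viewed in `(ℝ[x,y])[[t]]`. -/
abbrev Yv : PowerSeries (MvPolynomial (Fin 2) ℝ) :=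
  PowerSeries.C (MvPolynomial.X 1)

/-- The length variable `t`. -/
abbrev T : PowerSeries (MvPolynomial (Fin 2) ℝ) := PowerSeries.X

section Walks

variable {S : Finset (ℤ × ℤ)} {n : ℕ}

lemma psum_snoc_castSucc (v : Fin n → ℤ × ℤ) (s : ℤ × ℤ) (i : Fin n) :
    psum (Fin.snoc v s) i.castSucc = psum v i := by
  simp only [psum, Finset.sum_filter, Fin.sum_univ_castSucc, Fin.snoc_castSucc,
    Fin.castSucc_le_castSucc_iff, (Fin.castSucc_lt_last i).not_ge, if_false, add_zero]

lemma psum_last (v : Fin (n + 1) → ℤ × ℤ) : psum v (Fin.last n) = endpt v := by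
  simp [psum, endpt, Fin.le_last]

lemma endpt_snoc (v : Fin n → ℤ × ℤ) (s : ℤ × ℤ) :
    endpt (Fin.snoc v s) = endpt v + s := by
  simp [endpt, Fin.sum_univ_castSucc]

lemma psum_snoc_last (v : Fin n → ℤ × ℤ) (s : ℤ × ℤ) :
    psum (Fin.snoc v s) (Fin.last n) = endpt v + s := by
  rw [psum_last, endpt_snoc]

lemma endpt_nonneg_of_mem_quadWalks {v : Fin n → ℤ × ℤ} (hv : v ∈ quadWalks S n) :
    0 ≤ endpt v := by
  cases n with
  | zero => simp [endpt]
  | succ m => rw [← psum_last]; exact Prod.mk_le_mk.mpr ((Finset.mem_filter.mp hv).2 (Fin.last m))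

lemma snoc_mem_quadWalks_iff (v : Fin n → ℤ × ℤ) (s : ℤ × ℤ) :
    Fin.snoc v s ∈ quadWalks S (n + 1) ↔ v ∈ quadWalks S n ∧ s ∈ S ∧ 0 ≤ endpt v + s := by
  simp only [quadWalks, Finset.mem_filter, Fintype.mem_piFinset, Fin.forall_fin_succ',
    Fin.snoc_castSucc, Fin.snoc_last, psum_snoc_castSucc, psum_snoc_last, Prod.le_def,
    Prod.fst_zero, Prod.snd_zero]
  tauto

lemma card_filter_psum_snoc (p : ℤ × ℤ → Prop) [DecidablePred p] (v : Fin n → ℤ × ℤ)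
    (s : ℤ × ℤ) :
    (Finset.univ.filter fun i => p (psum (Fin.snoc v s) i)).card
      = (Finset.univ.filter fun i => p (psum v i)).card + if p (endpt v + s) then 1 else 0 := by
  rw [Finset.card_filter, Finset.card_filter, Fin.sum_univ_castSucc]
  simp only [psum_snoc_castSucc, psum_snoc_last]

/-- The factor `a` or `b` picked up by a step ending on the x- or y-axis. -/
def boundaryWeight (a b : ℝ) (e : ℤ × ℤ) : ℝ :=
  (if e.2 = 0 then a else 1) * (if e.1 = 0 then b else 1)

lemma wt_snoc (d : ℤ × ℤ → ℝ) (a b : ℝ) (v : Fin n → ℤ × ℤ) (s : ℤ × ℤ) :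
    wt d a b (Fin.snoc v s) = wt d a b v * d s * boundaryWeight a b (endpt v + s) := by
  rw [wt, wt, Fin.prod_univ_castSucc, card_filter_psum_snoc (fun e => e.2 = 0),
    card_filter_psum_snoc (fun e => e.1 = 0), pow_add, pow_add, boundaryWeight]
  simp only [Fin.snoc_castSucc, Fin.snoc_last]
  split_ifs <;> ring

def extensions (S : Finset (ℤ × ℤ)) (n : ℕ) : Finset ((Fin n → ℤ × ℤ) × (ℤ × ℤ)) :=
  (quadWalks S n ×ˢ S).filter fun p => 0 ≤ endpt p.1 + p.2

lemma sum_quadWalks_succ {M : Type*} [AddCommMonoid M] (f : (Fin (n + 1) → ℤ × ℤ) → M) :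
    ∑ v ∈ quadWalks S (n + 1), f v = ∑ p ∈ extensions S n, f (Fin.snoc p.1 p.2) := by
  refine Finset.sum_nbij' (fun v => (Fin.init v, v (Fin.last n))) (fun p => Fin.snoc p.1 p.2)
    ?_ ?_ (fun v _ => Fin.snoc_init_self v) (fun p _ => by simp) ?_
  · intro v hv
    rw [← Fin.snoc_init_self v, snoc_mem_quadWalks_iff] at hv
    simpa [extensions, and_assoc] using hv
  · intro p hp
    simp only [extensions, Finset.mem_filter, Finset.mem_product] at hp
    exact (snoc_mem_quadWalks_iff _ _).mpr ⟨hp.1.1, hp.1.2, hp.2⟩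
  · intro v _
    simp

lemma endpt_ne_zero_of_mem_quadWalks (hS : ∀ s ∈ S, 0 < s.1 ∨ 0 < s.2)
    {v : Fin (n + 1) → ℤ × ℤ} (hv : v ∈ quadWalks S (n + 1)) : endpt v ≠ 0 := by
  rw [← Fin.snoc_init_self v, snoc_mem_quadWalks_iff] at hv
  obtain ⟨hw, hs, -⟩ := hv
  have he := Prod.le_def.mp (endpt_nonneg_of_mem_quadWalks hw)
  rw [← Fin.snoc_init_self v, endpt_snoc]
  intro h0
  have := Prod.ext_iff.mp h0
  simp only [Prod.fst_add, Prod.snd_add, Prod.fst_zero, Prod.snd_zero] at he this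
  rcases hS _ hs with h | h <;> omega

lemma quadWalks_zero : quadWalks S 0 = {![]} := by
  ext v
  simp [quadWalks, Subsingleton.elim v ![], Subsingleton.elim default ![]]

end Walks

section Coefficients

open MvPolynomial

/-- `x^i y^j` for `e = (i, j)`; negative exponents are truncated to `0`. -/
def xyPow (e : ℤ × ℤ) : MvPolynomial (Fin 2) ℝ :=
  X 0 ^ e.1.toNat * X 1 ^ e.2.toNat

lemma xyPow_add {e f : ℤ × ℤ} (he : 0 ≤ e) (hf : 0 ≤ f) :
    xyPow (e + f) = xyPow e * xyPow f := by
  obtain ⟨he1, he2⟩ := Prod.le_def.mp he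
  obtain ⟨hf1, hf2⟩ := Prod.le_def.mp hf
  simp only [xyPow, Prod.fst_add, Prod.snd_add, Int.toNat_add he1 hf1, Int.toNat_add he2 hf2]
  ring

lemma xyPow_add_one_one {e : ℤ × ℤ} (he : 0 ≤ e) :
    xyPow (e + (1, 1)) = X 0 * X 1 * xyPow e := by
  rw [xyPow_add he (by decide), mul_comm]
  simp [xyPow]

variable (S : Finset (ℤ × ℤ)) (d : ℤ × ℤ → ℝ) (a b : ℝ) (n : ℕ)

lemma coeff_Q :
    PowerSeries.coeff n (Q S d a b) = ∑ v ∈ quadWalks S n, C (wt d a b v) * xyPow (endpt v) := by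
  simp only [Q, PowerSeries.coeff_mk, xyPow, mul_assoc]

lemma coeff_Qx0 :
    PowerSeries.coeff n (Qx0 S d a b)
      = ∑ v ∈ (quadWalks S n).filter (fun v => (endpt v).2 = 0),
          C (wt d a b v) * xyPow (endpt v) := by
  rw [Qx0, PowerSeries.coeff_mk]
  refine Finset.sum_congr rfl fun v hv => ?_
  simp [xyPow, (Finset.mem_filter.mp hv).2]

lemma coeff_Qy0 :
    PowerSeries.coeff n (Qy0 S d a b)
      = ∑ v ∈ (quadWalks S n).filter (fun v => (endpt v).1 = 0),
          C (wt d a b v) * xyPow (endpt v) := by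
  rw [Qy0, PowerSeries.coeff_mk]
  refine Finset.sum_congr rfl fun v hv => ?_
  simp [xyPow, (Finset.mem_filter.mp hv).2]

lemma coeff_zero_Q : PowerSeries.coeff 0 (Q S d a b) = 1 := by
  simp [coeff_Q, quadWalks_zero, wt, endpt, xyPow]

lemma coeff_zero_Qx0 : PowerSeries.coeff 0 (Qx0 S d a b) = 1 := by
  simp [coeff_Qx0, quadWalks_zero, wt, endpt, xyPow]

lemma coeff_zero_Qy0 : PowerSeries.coeff 0 (Qy0 S d a b) = 1 := by
  simp [coeff_Qy0, quadWalks_zero, wt, endpt, xyPow]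

end Coefficients

section BoundaryTerms

open MvPolynomial

variable {S : Finset (ℤ × ℤ)} (d : ℤ × ℤ → ℝ) {a b : ℝ} (n : ℕ)

lemma inv_boundaryWeight {e : ℤ × ℤ} (he : e ≠ 0) :
    (boundaryWeight a b e)⁻¹
      = 1 - (if e.2 = 0 then 1 - 1 / a else 0) - (if e.1 = 0 then 1 - 1 / b else 0) := by
  have : ¬(e.1 = 0 ∧ e.2 = 0) := fun h => he (Prod.ext h.1 h.2)
  unfold boundaryWeight
  split_ifs <;> simp_all

lemma xy_mul_coeff_succ_sub_boundary (hS : ∀ s ∈ S, 0 < s.1 ∨ 0 < s.2) (ha : a ≠ 0)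
    (hb : b ≠ 0) :
    X 0 * X 1 * (PowerSeries.coeff (n + 1) (Q S d a b)
        - C (1 - 1 / a) * PowerSeries.coeff (n + 1) (Qx0 S d a b)
        - C (1 - 1 / b) * PowerSeries.coeff (n + 1) (Qy0 S d a b))
      = ∑ p ∈ extensions S n, C (wt d a b p.1 * d p.2) * xyPow (endpt p.1 + p.2 + (1, 1)) := by
  have hweight : ∀ v ∈ quadWalks S (n + 1),
      C (wt d a b v) * xyPow (endpt v)
          - C (1 - 1 / a) * (if (endpt v).2 = 0 then C (wt d a b v) * xyPow (endpt v) else 0)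
          - C (1 - 1 / b) * (if (endpt v).1 = 0 then C (wt d a b v) * xyPow (endpt v) else 0)
        = C (wt d a b v * (boundaryWeight a b (endpt v))⁻¹) * xyPow (endpt v) := by
    intro v hv
    rw [inv_boundaryWeight (endpt_ne_zero_of_mem_quadWalks hS hv)]
    split_ifs <;> simp only [map_mul, map_sub, map_one, map_zero] <;> ring
  calc _ = ∑ v ∈ quadWalks S (n + 1),
        C (wt d a b v * (boundaryWeight a b (endpt v))⁻¹) * xyPow (endpt v + (1, 1)) := by
        rw [coeff_Q, coeff_Qx0, coeff_Qy0, Finset.sum_filter, Finset.sum_filter, Finset.mul_sum,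
          Finset.mul_sum, ← Finset.sum_sub_distrib, ← Finset.sum_sub_distrib, Finset.mul_sum]
        refine Finset.sum_congr rfl fun v hv => ?_
        rw [hweight v hv, xyPow_add_one_one (endpt_nonneg_of_mem_quadWalks hv)]
        ring
    _ = _ := by
        rw [sum_quadWalks_succ]
        refine Finset.sum_congr rfl fun p hp => ?_
        have hbw : boundaryWeight a b (endpt p.1 + p.2) ≠ 0 := by
          unfold boundaryWeight; split_ifs <;> simp [ha, hb]
        rw [wt_snoc, endpt_snoc, mul_inv_cancel_right₀ hbw]

end BoundaryTerms

section Kernel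

open MvPolynomial

def genusZeroSteps : Finset (ℤ × ℤ) := {(1, -1), (-1, 1), (1, 0), (0, 1), (1, 1)}

lemma pos_of_mem_genusZeroSteps : ∀ s ∈ genusZeroSteps, 0 < s.1 ∨ 0 < s.2 := by decide

/-- `x y S(x, y)` for the step polynomial `S`, so that the kernel is `x y - t · kernelPoly d`. -/
def kernelPoly (d : ℤ × ℤ → ℝ) : MvPolynomial (Fin 2) ℝ :=
  ∑ s ∈ genusZeroSteps, C (d s) * xyPow (s + (1, 1))

lemma kernelPoly_eq (d : ℤ × ℤ → ℝ) :
    kernelPoly d = C (d (1, -1)) * X 0 ^ 2 + C (d (-1, 1)) * X 1 ^ 2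
      + C (d (1, 0)) * X 0 ^ 2 * X 1 + C (d (0, 1)) * X 0 * X 1 ^ 2
      + C (d (1, 1)) * X 0 ^ 2 * X 1 ^ 2 := by
  rw [kernelPoly, genusZeroSteps, Finset.sum_insert (by decide), Finset.sum_insert (by decide),
    Finset.sum_insert (by decide), Finset.sum_insert (by decide), Finset.sum_singleton]
  simp only [xyPow, Prod.mk_add_mk, Int.reduceAdd, Int.reduceNeg, Int.reduceToNat, pow_zero,
    pow_one, mul_one, one_mul]
  ring

/-- A step leaves the quadrant only for `(1, -1)` from the x-axis and `(-1, 1)` from the y-axis;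
these give the two correction terms. -/
lemma xyPow_step_mul {s e : ℤ × ℤ} (hs : s ∈ genusZeroSteps) (he : 0 ≤ e) :
    xyPow (s + (1, 1)) * xyPow e
      = (if 0 ≤ e + s then xyPow (e + s + (1, 1)) else 0)
        + (if (1, -1) = s then (if e.2 = 0 then X 0 ^ 2 * xyPow e else 0) else 0)
        + (if (-1, 1) = s then (if e.1 = 0 then X 1 ^ 2 * xyPow e else 0) else 0) := by
  obtain ⟨he1, he2⟩ := Prod.le_def.mp he
  simp only [Prod.fst_zero, Prod.snd_zero] at he1 he2
  simp only [genusZeroSteps, Finset.mem_insert, Finset.mem_singleton] at hs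
  by_cases hes : 0 ≤ e + s
  · have hs1 : 0 ≤ s + (1, 1) := by rcases hs with rfl | rfl | rfl | rfl | rfl <;> decide
    obtain ⟨hes1, hes2⟩ := Prod.le_def.mp hes
    rw [if_pos hes, ← xyPow_add hs1 he, add_comm (s + (1, 1)) e, ← add_assoc]
    split_ifs <;> subst_vars <;> simp_all
  · rw [if_neg hes, zero_add]
    rcases hs with rfl | rfl | rfl | rfl | rfl <;>
      simp only [Prod.le_def, Prod.fst_zero, Prod.snd_zero, Prod.fst_add, Prod.snd_add] at hes
    · have he2 : e.2 = 0 := by omega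
      simp [he2, xyPow]
    · have he1 : e.1 = 0 := by omega
      simp [he1, xyPow]
    all_goals omega

end Kernel

section KernelCoefficients

open MvPolynomial

variable {S : Finset (ℤ × ℤ)} (d : ℤ × ℤ → ℝ) (a b : ℝ) (n : ℕ)

lemma kernelPoly_mul_xyPow {e : ℤ × ℤ} (he : 0 ≤ e) :
    kernelPoly d * xyPow e
      = ∑ s ∈ genusZeroSteps, (if 0 ≤ e + s then C (d s) * xyPow (e + s + (1, 1)) else 0)
        + (if e.2 = 0 then C (d (1, -1)) * X 0 ^ 2 * xyPow e else 0)
        + (if e.1 = 0 then C (d (-1, 1)) * X 1 ^ 2 * xyPow e else 0) := by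
  rw [kernelPoly, Finset.sum_mul]
  rw [Finset.sum_congr rfl fun s hs => by rw [mul_assoc, xyPow_step_mul hs he]]
  simp only [mul_add, mul_ite, mul_zero, Finset.sum_add_distrib, Finset.sum_ite_eq]
  simp [genusZeroSteps, mul_assoc]

lemma kernelPoly_mul_coeff_sub_boundary (hS : S ⊆ genusZeroSteps) (hd0 : ∀ s ∉ S, d s = 0) :
    kernelPoly d * PowerSeries.coeff n (Q S d a b)
        - C (d (1, -1)) * X 0 ^ 2 * PowerSeries.coeff n (Qx0 S d a b)
        - C (d (-1, 1)) * X 1 ^ 2 * PowerSeries.coeff n (Qy0 S d a b)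
      = ∑ p ∈ extensions S n, C (wt d a b p.1 * d p.2) * xyPow (endpt p.1 + p.2 + (1, 1)) := by
  rw [extensions, Finset.sum_filter, Finset.sum_product, coeff_Q, coeff_Qx0, coeff_Qy0,
    Finset.sum_filter, Finset.sum_filter, Finset.mul_sum, Finset.mul_sum, Finset.mul_sum,
    ← Finset.sum_sub_distrib, ← Finset.sum_sub_distrib]
  refine Finset.sum_congr rfl fun w hw => ?_
  have hsteps : ∑ s ∈ S, (if 0 ≤ endpt w + s then
        C (wt d a b w * d s) * xyPow (endpt w + s + (1, 1)) else 0)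
      = C (wt d a b w) * ∑ s ∈ genusZeroSteps, (if 0 ≤ endpt w + s then
        C (d s) * xyPow (endpt w + s + (1, 1)) else 0) := by
    rw [Finset.sum_subset hS fun s _ hs => by simp [hd0 s hs], Finset.mul_sum]
    simp only [mul_ite, mul_zero, map_mul, mul_assoc]
  rw [hsteps, mul_left_comm, kernelPoly_mul_xyPow d (endpt_nonneg_of_mem_quadWalks hw)]
  split_ifs <;> ring

end KernelCoefficients

theorem statement2_general (S : Finset (ℤ × ℤ)) (d : ℤ × ℤ → ℝ) (a b : ℝ)
    (hS : S ⊆ ({(1, -1), (-1, 1), (1, 0), (0, 1), (1, 1)} : Finset (ℤ × ℤ)))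
    (hd0 : ∀ v ∉ S, d v = 0)
    (ha : 0 < a) (hb : 0 < b) :
    (Xv * Yv
        - T * (CC (d (1, -1)) * Xv ^ 2 + CC (d (-1, 1)) * Yv ^ 2
            + CC (d (1, 0)) * Xv ^ 2 * Yv + CC (d (0, 1)) * Xv * Yv ^ 2
            + CC (d (1, 1)) * Xv ^ 2 * Yv ^ 2)) * Q S d a b
      = CC (1 - (1 - 1 / a) - (1 - 1 / b)) * Xv * Yv
        + (CC (1 - 1 / a) * Xv * Yv - T * CC (d (1, -1)) * Xv ^ 2) * Qx0 S d a b
        + (CC (1 - 1 / b) * Xv * Yv - T * CC (d (-1, 1)) * Yv ^ 2) * Qy0 S d a b := by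
  refine PowerSeries.ext fun n => ?_
  simp only [CC, Xv, Yv, T, sub_mul, add_mul, mul_assoc, ← map_pow, ← map_mul]
  cases n with
  | zero =>
    simp only [map_sub, map_add, PowerSeries.coeff_C_mul, PowerSeries.coeff_zero_X_mul,
      PowerSeries.coeff_zero_C, coeff_zero_Q, coeff_zero_Qx0, coeff_zero_Qy0, map_one]
    ring
  | succ m =>
    have h := (xy_mul_coeff_succ_sub_boundary d m
      (fun s hs => pos_of_mem_genusZeroSteps s (hS hs)) ha.ne' hb.ne').trans
      (kernelPoly_mul_coeff_sub_boundary d a b m hS hd0).symm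
    simp only [kernelPoly_eq, map_sub, map_one] at h
    simp only [map_sub, map_add, map_one, PowerSeries.coeff_C_mul, PowerSeries.coeff_succ_X_mul,
      PowerSeries.coeff_C, m.succ_ne_zero, if_false]
    linear_combination h

theorem statement2 (S : Finset (ℤ × ℤ)) (d : ℤ × ℤ → ℝ) (a b : ℝ)
    (hS : S ⊆ ({(1, -1), (-1, 1), (1, 0), (0, 1), (1, 1)} : Finset (ℤ × ℤ)))
    (hpm : (1, -1) ∈ S) (hmp : (-1, 1) ∈ S)
    (hd : ∀ v ∈ S, 0 < d v) (hd0 : ∀ v ∉ S, d v = 0)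
    (ha : 0 < a) (hb : 0 < b) :
    (Xv * Yv
        - T * (CC (d (1, -1)) * Xv ^ 2 + CC (d (-1, 1)) * Yv ^ 2
            + CC (d (1, 0)) * Xv ^ 2 * Yv + CC (d (0, 1)) * Xv * Yv ^ 2
            + CC (d (1, 1)) * Xv ^ 2 * Yv ^ 2)) * Q S d a b
      = CC (1 - (1 - 1 / a) - (1 - 1 / b)) * Xv * Yv
        + (CC (1 - 1 / a) * Xv * Yv - T * CC (d (1, -1)) * Xv ^ 2) * Qx0 S d a b
        + (CC (1 - 1 / b) * Xv * Yv - T * CC (d (-1, 1)) * Yv ^ 2) * Qy0 S d a b :=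
  statement2_general S d a b hS hd0 ha hb

end Stmt2
end
end

section
/- Let q ∈ ℂ ∖ {0}, let γ₁, γ₂ ∈ ℂ(s) be nonzero, let ω ∈ ℂ, and set γ = γ₁/γ₂. Suppose F, G ∈ ℂ(s) satisfy (a) γ₁·F + γ₂·G + ω = 0 and (b) γ·F^{ι₁} + ω/γ₂ = (γ·F + ω/γ₂)^{ι₂}. Define f̃ = (F + F^{ι₁})/2, g̃ = (G + G^{ι₂})/2, f̃_h = (F − F^{ι₁})/2 and g̃_h = (G − G^{ι₂})/2. Then: (1) γ₁·f̃ + γ₂·g̃ + ω = 0, with f̃^{ι₁} = f̃ and g̃^{ι₂} = g̃; and (2) γ₁·f̃_h + γ₂·g̃_h = 0, with f̃_h^{ι₁} = −f̃_h and g̃_h^{ι₂} = −g̃_h. -/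
/-!
Statement 5: In ℂ(s), with ι₁, ι₂ the ℂ-algebra automorphisms induced by s ↦ 1/s and
s ↦ q/s, if F and G satisfy the linear relation γ₁F + γ₂G + ω = 0 and the q-difference
symmetry (b), then the symmetrized pair (f̃, g̃) satisfies the inhomogeneous decoupling
equation and the antisymmetrized pair (f̃_h, g̃_h) satisfies the homogeneous one.
-/

noncomputable section

/-- An algebra equivalence of `RatFunc ℂ` whose square fixes `X` is an involution. -/
lemma aux_invol (ι : RatFunc ℂ ≃ₐ[ℂ] RatFunc ℂ) (h : ι (ι RatFunc.X) = RatFunc.X) :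
    ∀ x : RatFunc ℂ, ι (ι x) = x := by
  have key : ∀ p : Polynomial ℂ,
      ι (ι (algebraMap (Polynomial ℂ) (RatFunc ℂ) p)) =
        algebraMap (Polynomial ℂ) (RatFunc ℂ) p := by
    intro p
    have hX : algebraMap (Polynomial ℂ) (RatFunc ℂ) p = Polynomial.aeval RatFunc.X p := by
      rw [← RatFunc.algebraMap_X, Polynomial.aeval_algebraMap_apply, Polynomial.aeval_X_left_apply]
    rw [hX, ← Polynomial.aeval_algHom_apply, ← Polynomial.aeval_algHom_apply, h]
  intro x
  induction x using RatFunc.induction_on with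
  | f p q hq =>
    simp only [map_div₀, key]

theorem statement5 (q : ℂ) (hq : q ≠ 0)
    (ι₁ ι₂ : RatFunc ℂ ≃ₐ[ℂ] RatFunc ℂ)
    (hι₁ : ι₁ RatFunc.X = RatFunc.X⁻¹)
    (hι₂ : ι₂ RatFunc.X = RatFunc.C q * RatFunc.X⁻¹)
    (γ₁ γ₂ : RatFunc ℂ) (hγ₁ : γ₁ ≠ 0) (hγ₂ : γ₂ ≠ 0) (ω : ℂ)
    (F G : RatFunc ℂ)
    (ha : γ₁ * F + γ₂ * G + RatFunc.C ω = 0)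
    (hb : (γ₁ / γ₂) * ι₁ F + RatFunc.C ω / γ₂
        = ι₂ ((γ₁ / γ₂) * F + RatFunc.C ω / γ₂)) :
    (γ₁ * ((F + ι₁ F) / 2) + γ₂ * ((G + ι₂ G) / 2) + RatFunc.C ω = 0 ∧
      ι₁ ((F + ι₁ F) / 2) = (F + ι₁ F) / 2 ∧
      ι₂ ((G + ι₂ G) / 2) = (G + ι₂ G) / 2) ∧
    (γ₁ * ((F - ι₁ F) / 2) + γ₂ * ((G - ι₂ G) / 2) = 0 ∧
      ι₁ ((F - ι₁ F) / 2) = -((F - ι₁ F) / 2) ∧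
      ι₂ ((G - ι₂ G) / 2) = -((G - ι₂ G) / 2)) := by
  have hCq : ι₂ (RatFunc.C q) = RatFunc.C q := by
    rw [← RatFunc.algebraMap_C]; exact ι₂.commutes q
  haveI : CharZero (RatFunc ℂ) :=
    charZero_of_injective_algebraMap (algebraMap ℂ (RatFunc ℂ)).injective
  have hCq0 : (RatFunc.C q : RatFunc ℂ) ≠ 0 := by
    rw [← RatFunc.algebraMap_C]
    exact fun h => hq ((algebraMap ℂ (RatFunc ℂ)).injective (by simpa using h))
  have hX0 : (RatFunc.X : RatFunc ℂ) ≠ 0 := RatFunc.X_ne_zero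
  have inv1 : ∀ x, ι₁ (ι₁ x) = x := by
    apply aux_invol
    rw [hι₁, map_inv₀, hι₁, inv_inv]
  have inv2 : ∀ x, ι₂ (ι₂ x) = x := by
    apply aux_invol
    rw [hι₂, map_mul, map_inv₀, hCq, hι₂, mul_inv, inv_inv]
    field_simp
  -- derive ha' : γ₁ * ι₁ F + γ₂ * ι₂ G + C ω = 0
  have harg : (γ₁ / γ₂) * F + RatFunc.C ω / γ₂ = -G := by
    field_simp
    linear_combination ha
  have hb' : (γ₁ / γ₂) * ι₁ F + RatFunc.C ω / γ₂ = -ι₂ G := by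
    rw [hb, harg, map_neg]
  have ha' : γ₁ * ι₁ F + γ₂ * ι₂ G + RatFunc.C ω = 0 := by
    have := hb'
    field_simp at this
    linear_combination this
  refine ⟨⟨by linear_combination (1/2 : RatFunc ℂ) * ha + (1/2 : RatFunc ℂ) * ha', ?_, ?_⟩,
    ⟨by linear_combination (1/2 : RatFunc ℂ) * ha - (1/2 : RatFunc ℂ) * ha', ?_, ?_⟩⟩ <;>
  · simp only [map_div₀, map_add, map_sub, map_ofNat, inv1, inv2]
    ring
end
end

section
/- Let q ∈ ℂ ∖ {0}, let γ₁, γ₂ ∈ ℂ(s) be nonzero, set γ = γ₁/γ₂, and let ε ∈ {+1, −1}. Let (h₁, h₂) ∈ ℂ(s)² be a pair with (h₁, h₂) ≠ (0, 0), satisfying γ₁·h₁ + γ₂·h₂ = 0, h₁^{ι₁} = ε·h₁ and h₂^{ι₂} = ε·h₂. Then h₂ ≠ 0 and h₂^{σ}/h₂ = γ^{ι₁}/γ, i.e. γ·h₂^{σ} = γ^{ι₁}·h₂. -/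
/-!
Statement 6: In ℂ(s), a nonzero signed solution (h₁, h₂) of the homogeneous decoupling
equation γ₁h₁ + γ₂h₂ = 0 (with h₁^{ι₁} = εh₁, h₂^{ι₂} = εh₂ for a common sign ε) has
h₂ ≠ 0 and h₂ satisfies the rank-one q-difference equation γ·h₂^σ = γ^{ι₁}·h₂, where
γ = γ₁/γ₂.
-/

noncomputable section

/-- An algebra equivalence of `RatFunc ℂ` is determined by its value at `X`. -/
lemma algEquiv_apply_eq (e e' : RatFunc ℂ ≃ₐ[ℂ] RatFunc ℂ) (hX : e RatFunc.X = e' RatFunc.X)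
    (f : RatFunc ℂ) : e f = e' f := by
  have key : ∀ p : Polynomial ℂ, e (algebraMap (Polynomial ℂ) (RatFunc ℂ) p)
      = e' (algebraMap (Polynomial ℂ) (RatFunc ℂ) p) := by
    intro p
    have hp : algebraMap (Polynomial ℂ) (RatFunc ℂ) p = Polynomial.aeval RatFunc.X p := by
      rw [show (RatFunc.X : RatFunc ℂ) = algebraMap (Polynomial ℂ) (RatFunc ℂ) Polynomial.X
        from rfl, Polynomial.aeval_algebraMap_apply, Polynomial.aeval_X_left_apply]
    rw [hp, show (e : RatFunc ℂ → RatFunc ℂ) = (e : RatFunc ℂ →ₐ[ℂ] RatFunc ℂ) from rfl,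
      show (e' : RatFunc ℂ → RatFunc ℂ) = (e' : RatFunc ℂ →ₐ[ℂ] RatFunc ℂ) from rfl,
      ← Polynomial.aeval_algHom_apply, ← Polynomial.aeval_algHom_apply]
    exact congrArg (fun x => (Polynomial.aeval x) p) hX
  induction f using RatFunc.induction_on with
  | f p q hq => rw [map_div₀, map_div₀, key, key]

theorem statement6 (q : ℂ) (hq : q ≠ 0)
    (ι₁ ι₂ σ : RatFunc ℂ ≃ₐ[ℂ] RatFunc ℂ)
    (hι₁ : ι₁ RatFunc.X = RatFunc.X⁻¹)
    (hι₂ : ι₂ RatFunc.X = RatFunc.C q * RatFunc.X⁻¹)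
    (hσ : σ RatFunc.X = RatFunc.C q * RatFunc.X)
    (γ₁ γ₂ : RatFunc ℂ) (hγ₁ : γ₁ ≠ 0) (hγ₂ : γ₂ ≠ 0)
    (ε : ℂ) (hε : ε = 1 ∨ ε = -1)
    (h₁ h₂ : RatFunc ℂ) (hne : ¬(h₁ = 0 ∧ h₂ = 0))
    (hrel : γ₁ * h₁ + γ₂ * h₂ = 0)
    (hs₁ : ι₁ h₁ = RatFunc.C ε * h₁) (hs₂ : ι₂ h₂ = RatFunc.C ε * h₂) :
    h₂ ≠ 0 ∧ (γ₁ / γ₂) * σ h₂ = ι₁ (γ₁ / γ₂) * h₂ := by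
  have hεne : ε ≠ 0 := by rcases hε with h | h <;> simp [h]
  have hCε : (RatFunc.C ε : RatFunc ℂ) ≠ 0 := by
    simpa using hεne
  have hCε2 : RatFunc.C ε * RatFunc.C ε = 1 := by
    rw [← map_mul, ← map_one RatFunc.C]
    rcases hε with h | h <;> simp [h]
  -- h₂ ≠ 0 and h₁ ≠ 0
  have hh2 : h₂ ≠ 0 := by
    intro h2
    have h1 : h₁ = 0 := by
      have : γ₁ * h₁ = 0 := by rw [h2] at hrel; simpa using hrel
      rcases mul_eq_zero.mp this with h | h
      · exact absurd h hγ₁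
      · exact h
    exact hne ⟨h1, h2⟩
  have hh1 : h₁ ≠ 0 := by
    intro h1
    have h2 : h₂ = 0 := by
      have : γ₂ * h₂ = 0 := by rw [h1] at hrel; simpa using hrel
      rcases mul_eq_zero.mp this with h | h
      · exact absurd h hγ₂
      · exact h
    exact hne ⟨h1, h2⟩
  -- σ = ι₁ ∘ ι₂
  have hcomp : σ h₂ = ι₁ (ι₂ h₂) := by
    have := algEquiv_apply_eq σ (ι₂.trans ι₁) ?_ h₂
    · simpa using this
    · simp only [AlgEquiv.trans_apply, hσ, hι₂]
      rw [map_mul, map_inv₀, hι₁, inv_inv]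
      congr 1
      exact (ι₁.commutes q).symm
  have hσh2 : σ h₂ = RatFunc.C ε * ι₁ h₂ := by
    rw [hcomp, hs₂, map_mul]
    congr 1
    exact ι₁.commutes ε
  have hι₁h2 : ι₁ h₂ = RatFunc.C ε * σ h₂ := by
    rw [hσh2, ← mul_assoc, hCε2, one_mul]
  -- γ₁ / γ₂ = -h₂ / h₁
  have hγ : γ₁ / γ₂ = -h₂ / h₁ := by
    field_simp
    linear_combination hrel
  refine ⟨hh2, ?_⟩
  have hι₁h1 : ι₁ h₁ ≠ 0 := by
    rw [hs₁]; exact mul_ne_zero hCε hh1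
  have key : σ h₂ * ι₁ h₁ = ι₁ h₂ * h₁ := by rw [hs₁, hι₁h2]; ring
  rw [hγ, map_div₀, map_neg]
  rw [div_mul_eq_mul_div, div_mul_eq_mul_div, div_eq_div_iff hh1 hι₁h1]
  linear_combination (-h₂) * key
end
end

section
/- Let q ∈ ℂ ∖ {0} be not a root of unity and let u ∈ ℂ(s) be nonzero. Assume there exists a ∈ ℂ ∖ {0} such that either (a is a pole of u and for every integer n ∈ ℤ the point qⁿ·a is not a zero of u) or (a is a zero of u and for every integer n ∈ ℤ the point qⁿ·a is not a pole of u). Then there is no nonzero h ∈ ℂ(s) with h^{σ} = u·h (i.e. with h(q·s) = u(s)·h(s)). -/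
/-!
Statement 7 (pole propagation for rank-one q-difference equations): if q is not a root
of unity and u ∈ ℂ(s) has a pole (resp. zero) a ≠ 0 whose σ-orbit never meets a zero
(resp. pole) of u, then h^σ = u·h has no nonzero rational solution.
-/

noncomputable section

/-- `a` is a pole of the rational function `h`: the (reduced) denominator of `h`
vanishes at `a`. -/
def IsPole (h : RatFunc ℂ) (a : ℂ) : Prop := h.denom.eval a = 0

/-- `a` is a zero of the rational function `h`: the (reduced) numerator of `h`
vanishes at `a`. -/
def IsZero (h : RatFunc ℂ) (a : ℂ) : Prop := h.num.eval a = 0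

/-!
Write `ordAt b f` for the order of vanishing of `f` at `b` (negative at a pole). Since `σ` is
the substitution `s ↦ q s`, a solution of `σ h = u * h` satisfies
`ordAt (q * b) h = ordAt b u + ordAt b h`. Along the orbit `qⁿ a`, which is infinite because
`q` is not a root of unity, the hypothesis on `u` makes `n ↦ ordAt (qⁿ a) h` monotone, and
strictly so between `n = 0` and `n = 1`. But `h` has only finitely many zeros and poles, so
this sequence vanishes outside a finite set, and a monotone sequence on `ℤ` that is zero at both
ends is zero.
-/

open Polynomial Function

theorem Monotone.eq_zero_of_finite_support {β : Type*} [PartialOrder β] [Zero β] {f : ℤ → β}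
    (hf : Monotone f) (hfin : (support f).Finite) (n : ℤ) : f n = 0 := by
  obtain ⟨m, hm⟩ := hfin.bddBelow
  obtain ⟨M, hM⟩ := hfin.bddAbove
  have hlow : f (min n (m - 1)) = 0 := not_ne_iff.mp fun h => by have := hm h; omega
  have hhigh : f (max n (M + 1)) = 0 := not_ne_iff.mp fun h => by have := hM h; omega
  exact le_antisymm (hhigh ▸ hf (le_max_left _ _)) (hlow ▸ hf (min_le_left _ _))

theorem Antitone.eq_zero_of_finite_support {β : Type*} [PartialOrder β] [Zero β] {f : ℤ → β}
    (hf : Antitone f) (hfin : (support f).Finite) (n : ℤ) : f n = 0 :=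
  hf.dual_right.eq_zero_of_finite_support hfin n

theorem injective_zpow_mul {G₀ : Type*} [GroupWithZero G₀] {q a : G₀} (hq₀ : q ≠ 0)
    (hq : ¬IsOfFinOrder q) (ha : a ≠ 0) : Injective fun n : ℤ => q ^ n * a := by
  have hzpow : Injective fun n : ℤ => Units.mk0 q hq₀ ^ n :=
    injective_zpow_iff_not_isOfFinOrder.2 (by rwa [← Units.isOfFinOrder_val])
  intro m n hmn
  have hpow : q ^ m = q ^ n := mul_right_cancel₀ ha hmn
  exact hzpow (Units.val_injective (by simpa [Units.val_zpow_eq_zpow_val] using hpow))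

namespace RatFunc

variable {K : Type*} [Field K]

def ordAt (a : K) (h : RatFunc K) : ℤ :=
  (h.num.rootMultiplicity a : ℤ) - (h.denom.rootMultiplicity a : ℤ)

@[simp]
theorem ordAt_zero (a : K) : ordAt a (0 : RatFunc K) = 0 := by
  simp [ordAt]

theorem ordAt_div_algebraMap (a : K) {p r : K[X]} (hp : p ≠ 0) (hr : r ≠ 0) :
    ordAt a (algebraMap K[X] (RatFunc K) p / algebraMap K[X] (RatFunc K) r) =
      (p.rootMultiplicity a : ℤ) - (r.rootMultiplicity a : ℤ) := by
  set h := algebraMap K[X] (RatFunc K) p / algebraMap K[X] (RatFunc K) r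
  have hh : h ≠ 0 := div_ne_zero (by simpa using hp) (by simpa using hr)
  have hcross : h.num * r = p * h.denom := (num_mul_eq_mul_denom_iff hr).mpr rfl
  have hmult := congrArg (rootMultiplicity a) hcross
  rw [rootMultiplicity_mul (mul_ne_zero (num_ne_zero hh) hr),
    rootMultiplicity_mul (mul_ne_zero hp h.denom_ne_zero)] at hmult
  unfold ordAt
  omega

theorem ordAt_mul (a : K) {u h : RatFunc K} (hu : u ≠ 0) (hh : h ≠ 0) :
    ordAt a (u * h) = ordAt a u + ordAt a h := by
  have hnum := mul_ne_zero (num_ne_zero hu) (num_ne_zero hh)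
  have hden := mul_ne_zero u.denom_ne_zero h.denom_ne_zero
  have hrep : u * h = algebraMap K[X] (RatFunc K) (u.num * h.num) /
      algebraMap K[X] (RatFunc K) (u.denom * h.denom) := by
    rw [map_mul, map_mul, ← div_mul_div_comm, num_div_denom, num_div_denom]
  rw [hrep, ordAt_div_algebraMap a hnum hden, rootMultiplicity_mul hnum,
    rootMultiplicity_mul hden, ordAt, ordAt]
  push_cast
  ring

theorem finite_support_ordAt (h : RatFunc K) : (support fun a => ordAt a h).Finite := by
  classical
  refine (h.num.roots + h.denom.roots).toFinset.finite_toSet.subset fun a ha => ?_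
  contrapose! ha
  simp_all [ordAt, ← count_roots]

theorem apply_algebraMap_of_apply_X {σ : RatFunc K ≃ₐ[K] RatFunc K} {r : K[X]}
    (hσ : σ X = algebraMap K[X] (RatFunc K) r) (p : K[X]) :
    σ (algebraMap K[X] (RatFunc K) p) = algebraMap K[X] (RatFunc K) (p.comp r) := by
  have hext : σ.toAlgHom.comp (IsScalarTower.toAlgHom K K[X] (RatFunc K)) =
      (IsScalarTower.toAlgHom K K[X] (RatFunc K)).comp (aeval r) :=
    algHom_ext (by simpa [algebraMap_X] using hσ)
  simpa [comp_eq_aeval] using DFunLike.congr_fun hext p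

theorem ordAt_apply_of_apply_X_eq_C_mul_X {σ : RatFunc K ≃ₐ[K] RatFunc K} {q : K}
    (hq : q ≠ 0) (hσ : σ X = C q * X) (h : RatFunc K) (a : K) :
    ordAt a (σ h) = ordAt (q * a) h := by
  rcases eq_or_ne h 0 with rfl | hh
  · simp
  have hσ' : σ X = algebraMap K[X] (RatFunc K) (Polynomial.C q * Polynomial.X) := by
    rwa [map_mul, algebraMap_C, algebraMap_X]
  have hcomp {p : K[X]} (hp : p ≠ 0) : p.comp (Polynomial.C q * Polynomial.X) ≠ 0 := by
    simp [Polynomial.comp_eq_zero_iff, hp, hq]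
  have hmult (p : K[X]) :
      (p.comp (Polynomial.C q * Polynomial.X)).rootMultiplicity a = p.rootMultiplicity (q * a) := by
    simpa using rootMultiplicity_comp_C_mul_X_add_C p q 0 a hq.isUnit
  conv_lhs => rw [← h.num_div_denom, map_div₀, apply_algebraMap_of_apply_X hσ',
    apply_algebraMap_of_apply_X hσ']
  rw [ordAt_div_algebraMap a (hcomp (num_ne_zero hh)) (hcomp h.denom_ne_zero), hmult, hmult,
    ordAt]

end RatFunc

open RatFunc

theorem IsPole.ordAt_neg {u : RatFunc ℂ} {a : ℂ} (hpole : IsPole u a) : ordAt a u < 0 := by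
  have hnum : u.num.eval a ≠ 0 :=
    (aeval_ne_zero_of_isCoprime u.isCoprime_num_denom a).resolve_right (not_not.mpr hpole)
  have hnum₀ : u.num.rootMultiplicity a = 0 := rootMultiplicity_eq_zero hnum
  have hden : 0 < u.denom.rootMultiplicity a := (rootMultiplicity_pos u.denom_ne_zero).mpr hpole
  unfold ordAt
  omega

theorem IsZero.ordAt_pos {u : RatFunc ℂ} {a : ℂ} (hu : u ≠ 0) (hzero : IsZero u a) :
    0 < ordAt a u := by
  have hden : u.denom.eval a ≠ 0 :=
    (aeval_ne_zero_of_isCoprime u.isCoprime_num_denom a).resolve_left (not_not.mpr hzero)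
  have hden₀ : u.denom.rootMultiplicity a = 0 := rootMultiplicity_eq_zero hden
  have hnum : 0 < u.num.rootMultiplicity a := (rootMultiplicity_pos (num_ne_zero hu)).mpr hzero
  unfold ordAt
  omega

theorem ordAt_nonpos_of_not_isZero {u : RatFunc ℂ} {a : ℂ} (hzero : ¬IsZero u a) :
    ordAt a u ≤ 0 := by
  have hnum₀ : u.num.rootMultiplicity a = 0 := rootMultiplicity_eq_zero hzero
  unfold ordAt
  omega

theorem ordAt_nonneg_of_not_isPole {u : RatFunc ℂ} {a : ℂ} (hpole : ¬IsPole u a) :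
    0 ≤ ordAt a u := by
  have hden₀ : u.denom.rootMultiplicity a = 0 := rootMultiplicity_eq_zero hpole
  unfold ordAt
  omega

theorem statement7 (q : ℂ) (hq : q ≠ 0) (hroot : ∀ n : ℕ, 1 ≤ n → q ^ n ≠ 1)
    (σ : RatFunc ℂ ≃ₐ[ℂ] RatFunc ℂ)
    (hσ : σ RatFunc.X = RatFunc.C q * RatFunc.X)
    (u : RatFunc ℂ) (hu : u ≠ 0)
    (hcrit : ∃ a : ℂ, a ≠ 0 ∧
      ((IsPole u a ∧ ∀ n : ℤ, ¬ IsZero u (q ^ n * a)) ∨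
        (IsZero u a ∧ ∀ n : ℤ, ¬ IsPole u (q ^ n * a)))) :
    ¬ ∃ h : RatFunc ℂ, h ≠ 0 ∧ σ h = u * h := by
  rintro ⟨h, hh, hsol⟩
  obtain ⟨a, ha, hcrit⟩ := hcrit
  have hinfinite : ¬IsOfFinOrder q := by
    rw [isOfFinOrder_iff_pow_eq_one]
    rintro ⟨n, hn, hqn⟩
    exact hroot n hn hqn
  set F : ℤ → ℤ := fun n => ordAt (q ^ n * a) h
  have hstep (n : ℤ) : F (n + 1) = ordAt (q ^ n * a) u + F n := by
    simp only [F]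
    rw [show q ^ (n + 1) * a = q * (q ^ n * a) by rw [zpow_add_one₀ hq]; ring,
      ← ordAt_apply_of_apply_X_eq_C_mul_X hq hσ, hsol, ordAt_mul _ hu hh]
  have hfin : (support F).Finite :=
    (finite_support_ordAt h).preimage (injective_zpow_mul hq hinfinite ha).injOn
  have hF₁ : F 1 = ordAt a u + F 0 := by simpa using hstep 0
  rcases hcrit with ⟨hpole, hnozero⟩ | ⟨hzero, hnopole⟩
  · have hanti : Antitone F := antitone_int_of_succ_le fun n => by
      linarith [hstep n, ordAt_nonpos_of_not_isZero (hnozero n)]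
    linarith [hpole.ordAt_neg, hanti.eq_zero_of_finite_support hfin 0,
      hanti.eq_zero_of_finite_support hfin 1]
  · have hmono : Monotone F := monotone_int_of_le_succ fun n => by
      linarith [hstep n, ordAt_nonneg_of_not_isPole (hnopole n)]
    linarith [hzero.ordAt_pos hu, hmono.eq_zero_of_finite_support hfin 0,
      hmono.eq_zero_of_finite_support hfin 1]
end
end

section
/- Let q ∈ ℂ ∖ {0} be not a root of unity and let γ₁, γ₂ ∈ ℂ(s) be nonzero. Suppose there exists a pair (h₁', h₂') ∈ ℂ(s)² with (h₁', h₂') ≠ (0, 0) satisfying γ₁·h₁' + γ₂·h₂' = 0, (h₁')^{ι₁} = ε₁·h₁' and (h₂')^{ι₂} = ε₂·h₂' for some signs ε₁, ε₂ ∈ {+1, −1} with ε₁ = +1 or ε₂ = +1. Then the only pair (h₁, h₂) ∈ ℂ(s)² satisfying γ₁·h₁ + γ₂·h₂ = 0 with h₁^{ι₁} = −h₁ and h₂^{ι₂} = −h₂ is (h₁, h₂) = (0, 0). -/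
/-!
If both pairs were nonzero, all four components would be nonzero (as `γ₁, γ₂ ≠ 0`), and
`f = h₁ / h₁' = h₂ / h₂'` would satisfy `f^{ι₁} = -ε₁ f` and `f^{ι₂} = -ε₂ f`. The composite
`ι₁ ∘ ι₂` is the dilation `s ↦ q s` and multiplies `f` by `ε₁ ε₂ = ±1`, so the dilation by `q²`
fixes `f`, and `f` is a nonzero constant. Constants are fixed by `ι₁` and `ι₂`, which forces
`ε₁ = ε₂ = -1`.

A rational function fixed by a dilation `s ↦ r s` with `r` of infinite order is constant: its
coprime numerator and denominator each divide their own dilate, which makes them monomials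
`a sᵐ` and `b sⁿ`, and then `rᵐ = rⁿ` gives `m = n`.
-/

theorem pow_injective_of_ne_zero_of_not_isOfFinOrder {G₀ : Type*} [GroupWithZero G₀] {r : G₀}
    (hr₀ : r ≠ 0) (hr : ¬IsOfFinOrder r) : Function.Injective (r ^ · : ℕ → G₀) := by
  have hu : ¬IsOfFinOrder (Units.mk0 r hr₀) := by rwa [← Units.isOfFinOrder_val]
  exact fun m n h ↦ injective_pow_iff_not_isOfFinOrder.mpr hu (Units.ext (by simpa using h))

namespace Polynomial

variable {K : Type*} [Field K] {r : K} {p : K[X]}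

theorem C_mul_X_pow_eq_self_of_comp_C_mul_X_eq {u : K} (hr₀ : r ≠ 0) (hr : ¬IsOfFinOrder r)
    (h : p.comp (C r * X) = C u * p) : C p.leadingCoeff * X ^ p.natDegree = p := by
  have hsupp : ∀ i ∈ p.support, r ^ i = u := fun i hi ↦ by
    have hi' := congr(coeff $h i)
    rw [comp_C_mul_X_coeff, coeff_C_mul, mul_comm u] at hi'
    exact mul_left_cancel₀ (mem_support_iff.mp hi) hi'
  exact C_mul_X_pow_eq_self <| Finset.card_le_one.mpr fun j hj k hk ↦
    pow_injective_of_ne_zero_of_not_isOfFinOrder hr₀ hr ((hsupp j hj).trans (hsupp k hk).symm)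

theorem exists_comp_C_mul_X_eq_C_mul_of_dvd (hr₀ : r ≠ 0) (h : p ∣ p.comp (C r * X)) :
    ∃ u, p.comp (C r * X) = C u * p := by
  obtain ⟨v, hv⟩ := h
  rcases eq_or_ne p 0 with rfl | hp
  · exact ⟨0, by simp⟩
  have hv₀ : v ≠ 0 := by
    rintro rfl
    rw [mul_zero, comp_C_mul_X_eq_zero_iff (mem_nonZeroDivisors_of_ne_zero hr₀)] at hv
    exact hp hv
  have hdeg := congr_arg natDegree hv
  rw [natDegree_comp, natDegree_C_mul_X r hr₀, mul_one, natDegree_mul hp hv₀,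
    left_eq_add, natDegree_eq_zero] at hdeg
  obtain ⟨u, rfl⟩ := hdeg
  exact ⟨u, by rw [hv, mul_comm]⟩

theorem exists_eq_C_mul_X_pow_of_dvd_comp_C_mul_X (hr₀ : r ≠ 0) (hr : ¬IsOfFinOrder r)
    (h : p ∣ p.comp (C r * X)) : ∃ (a : K) (n : ℕ), p = C a * X ^ n :=
  let ⟨_, hu⟩ := exists_comp_C_mul_X_eq_C_mul_of_dvd hr₀ h
  ⟨_, _, (C_mul_X_pow_eq_self_of_comp_C_mul_X_eq hr₀ hr hu).symm⟩

end Polynomial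

namespace RatFunc

variable {K : Type*} [Field K]

@[simp]
theorem algEquiv_apply_C (σ : RatFunc K ≃ₐ[K] RatFunc K) (a : K) : σ (C a) = C a := by
  rw [← algebraMap_eq_C]
  exact σ.commutes a

theorem algEquiv_apply_algebraMap_of_apply_X {σ : RatFunc K ≃ₐ[K] RatFunc K} {r : K}
    (hσ : σ X = C r * X) (p : Polynomial K) :
    σ (algebraMap (Polynomial K) (RatFunc K) p) =
      algebraMap (Polynomial K) (RatFunc K) (p.comp (Polynomial.C r * Polynomial.X)) := by
  rw [← aeval_X_left_eq_algebraMap, ← aeval_X_left_eq_algebraMap, Polynomial.aeval_comp,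
    ← Polynomial.aeval_algHom_apply σ]
  simp [hσ, ← algebraMap_eq_C]

theorem num_comp_mul_denom_eq_of_algEquiv_apply_eq_self {σ : RatFunc K ≃ₐ[K] RatFunc K} {r : K}
    (hσ : σ X = C r * X) (hr₀ : r ≠ 0) {f : RatFunc K} (hf : σ f = f) :
    f.num.comp (Polynomial.C r * Polynomial.X) * f.denom =
      f.num * f.denom.comp (Polynomial.C r * Polynomial.X) := by
  have hdenom_comp : f.denom.comp (Polynomial.C r * Polynomial.X) ≠ 0 := by
    simp [Polynomial.comp_C_mul_X_eq_zero_iff, hr₀, f.denom_ne_zero]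
  apply algebraMap_injective K
  rw [← f.num_div_denom, map_div₀, algEquiv_apply_algebraMap_of_apply_X hσ,
    algEquiv_apply_algebraMap_of_apply_X hσ,
    div_eq_div_iff (algebraMap_ne_zero hdenom_comp) (algebraMap_ne_zero f.denom_ne_zero)] at hf
  rwa [map_mul, map_mul]

theorem exists_eq_C_of_algEquiv_apply_eq_self {σ : RatFunc K ≃ₐ[K] RatFunc K} {r : K}
    (hσ : σ X = C r * X) (hr : ¬IsOfFinOrder r) {f : RatFunc K} (hf : σ f = f) :
    ∃ a, f = C a := by
  have hr₀ : r ≠ 0 := by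
    rintro rfl
    exact X_ne_zero (σ.injective (by rw [hσ, map_zero, map_zero, zero_mul]))
  have hcross := num_comp_mul_denom_eq_of_algEquiv_apply_eq_self hσ hr₀ hf
  have hnum : f.num ∣ f.num.comp (Polynomial.C r * Polynomial.X) :=
    f.isCoprime_num_denom.dvd_of_dvd_mul_right (Dvd.intro _ hcross.symm)
  have hdenom : f.denom ∣ f.denom.comp (Polynomial.C r * Polynomial.X) :=
    f.isCoprime_num_denom.symm.dvd_of_dvd_mul_left (Dvd.intro_left _ hcross)
  obtain ⟨a, m, hm⟩ := Polynomial.exists_eq_C_mul_X_pow_of_dvd_comp_C_mul_X hr₀ hr hnum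
  obtain ⟨b, n, hn⟩ := Polynomial.exists_eq_C_mul_X_pow_of_dvd_comp_C_mul_X hr₀ hr hdenom
  have hb : b ≠ 0 := by rintro rfl; simp [f.denom_ne_zero] at hn
  have hf' : f = C a * X ^ m / (C b * X ^ n) := by
    rw [← f.num_div_denom, hm, hn]
    simp [algebraMap_C, algebraMap_X]
  rcases eq_or_ne a 0 with rfl | ha
  · exact ⟨0, by simpa using hf'⟩
  rw [hf'] at hf
  simp only [map_div₀, map_mul, map_pow, algEquiv_apply_C, hσ, mul_pow] at hf
  rw [div_eq_div_iff (by simp [hb, hr₀, X_ne_zero]) (by simp [hb, X_ne_zero])] at hf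
  have hmn : m = n := by
    refine pow_injective_of_ne_zero_of_not_isOfFinOrder hr₀ hr (C_injective ?_)
    refine mul_right_cancel₀ (b := C a * X ^ m * C b * X ^ n) (by simp [ha, hb, X_ne_zero]) ?_
    rw [map_pow, map_pow]
    linear_combination hf
  refine ⟨a / b, ?_⟩
  rw [hf', hmn, map_div₀]
  field_simp [X_ne_zero]

theorem algEquiv_apply_div_eq_C_neg_mul {ι : RatFunc K ≃ₐ[K] RatFunc K} {a b : RatFunc K}
    {ε : K} (hε : ε = 1 ∨ ε = -1) (ha : ι a = -a) (hb : ι b = C ε * b) :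
    ι (a / b) = C (-ε) * (a / b) := by
  rw [map_div₀, ha, hb]
  rcases hε with rfl | rfl <;> simp [neg_div, div_neg]

theorem eq_one_of_algEquiv_apply_C_eq_C_mul {ι : RatFunc K ≃ₐ[K] RatFunc K} {a e : K}
    (ha : a ≠ 0) (h : ι (C a) = C e * C a) : e = 1 := by
  rw [algEquiv_apply_C, ← map_mul] at h
  exact (mul_eq_right₀ ha).mp (C_injective h).symm

theorem algEquiv_pow_apply_of_apply_eq_C_mul {σ : RatFunc K ≃ₐ[K] RatFunc K} {g : RatFunc K}
    {c : K} (h : σ g = C c * g) (n : ℕ) : (σ ^ n) g = C (c ^ n) * g := by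
  induction n with
  | zero => simp
  | succ n ih =>
    rw [pow_succ', AlgEquiv.mul_apply, ih, map_mul, h, algEquiv_apply_C, pow_succ', map_mul]
    ring

theorem exists_eq_C_of_algEquiv_apply_eq_C_mul {σ : RatFunc K ≃ₐ[K] RatFunc K} {r : K}
    (hσ : σ X = C r * X) (hr : ¬IsOfFinOrder r) {f : RatFunc K} {c : K} {n : ℕ} (hn : n ≠ 0)
    (hc : c ^ n = 1) (hf : σ f = C c * f) : ∃ a, f = C a := by
  refine exists_eq_C_of_algEquiv_apply_eq_self (algEquiv_pow_apply_of_apply_eq_C_mul hσ n) ?_ ?_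
  · rwa [isOfFinOrder_pow, or_iff_left hn]
  · rw [algEquiv_pow_apply_of_apply_eq_C_mul hf, hc, map_one, one_mul]

end RatFunc

theorem ne_zero_and_ne_zero_of_mul_add_mul_eq_zero {R : Type*} [CommRing R] [NoZeroDivisors R]
    {γ₁ γ₂ a b : R} (hγ₁ : γ₁ ≠ 0) (hγ₂ : γ₂ ≠ 0) (h : γ₁ * a + γ₂ * b = 0)
    (hab : ¬(a = 0 ∧ b = 0)) : a ≠ 0 ∧ b ≠ 0 := by
  constructor <;> rintro rfl <;> simp_all

theorem div_eq_div_of_mul_add_mul_eq_zero {F : Type*} [Field F] {γ₁ γ₂ a b a' b' : F}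
    (hγ₁ : γ₁ ≠ 0) (ha' : a' ≠ 0) (hb' : b' ≠ 0) (h : γ₁ * a + γ₂ * b = 0)
    (h' : γ₁ * a' + γ₂ * b' = 0) : a / a' = b / b' := by
  rw [div_eq_div_iff ha' hb']
  refine mul_left_cancel₀ hγ₁ ?_
  linear_combination b' * h - b * h'

theorem statement9_general (q : ℂ) (hroot : ∀ n : ℕ, 1 ≤ n → q ^ n ≠ 1)
    (ι₁ ι₂ : RatFunc ℂ ≃ₐ[ℂ] RatFunc ℂ)
    (hι₁ : ι₁ RatFunc.X = RatFunc.X⁻¹)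
    (hι₂ : ι₂ RatFunc.X = RatFunc.C q * RatFunc.X⁻¹)
    (γ₁ γ₂ : RatFunc ℂ) (hγ₁ : γ₁ ≠ 0) (hγ₂ : γ₂ ≠ 0)
    (ε₁ ε₂ : ℂ) (hε₁ : ε₁ = 1 ∨ ε₁ = -1) (hε₂ : ε₂ = 1 ∨ ε₂ = -1)
    (hsign : ε₁ = 1 ∨ ε₂ = 1)
    (h₁' h₂' : RatFunc ℂ) (hne : ¬(h₁' = 0 ∧ h₂' = 0))
    (hrel' : γ₁ * h₁' + γ₂ * h₂' = 0)
    (hs₁' : ι₁ h₁' = RatFunc.C ε₁ * h₁') (hs₂' : ι₂ h₂' = RatFunc.C ε₂ * h₂') :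
    ∀ h₁ h₂ : RatFunc ℂ, γ₁ * h₁ + γ₂ * h₂ = 0 →
      ι₁ h₁ = -h₁ → ι₂ h₂ = -h₂ → h₁ = 0 ∧ h₂ = 0 := by
  intro h₁ h₂ hrel hs₁ hs₂
  by_contra hne₀
  obtain ⟨h₁₀, -⟩ := ne_zero_and_ne_zero_of_mul_add_mul_eq_zero hγ₁ hγ₂ hrel hne₀
  obtain ⟨h₁'₀, h₂'₀⟩ := ne_zero_and_ne_zero_of_mul_add_mul_eq_zero hγ₁ hγ₂ hrel' hne
  have hι₁f : ι₁ (h₁ / h₁') = RatFunc.C (-ε₁) * (h₁ / h₁') :=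
    RatFunc.algEquiv_apply_div_eq_C_neg_mul hε₁ hs₁ hs₁'
  have hι₂f : ι₂ (h₁ / h₁') = RatFunc.C (-ε₂) * (h₁ / h₁') := by
    rw [div_eq_div_of_mul_add_mul_eq_zero hγ₁ h₁'₀ h₂'₀ hrel hrel']
    exact RatFunc.algEquiv_apply_div_eq_C_neg_mul hε₂ hs₂ hs₂'
  have hσX : (ι₁ * ι₂) RatFunc.X = RatFunc.C q * RatFunc.X := by
    simp [AlgEquiv.mul_apply, hι₂, hι₁]
  have hσf : (ι₁ * ι₂) (h₁ / h₁') = RatFunc.C (ε₁ * ε₂) * (h₁ / h₁') := by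
    rw [AlgEquiv.mul_apply, hι₂f, map_mul, hι₁f, RatFunc.algEquiv_apply_C, ← mul_assoc, ← map_mul,
      neg_mul_neg, mul_comm ε₂]
  have hq : ¬IsOfFinOrder q := fun h ↦
    let ⟨n, hn, hqn⟩ := isOfFinOrder_iff_pow_eq_one.mp h
    hroot n hn hqn
  obtain ⟨a, ha⟩ := RatFunc.exists_eq_C_of_algEquiv_apply_eq_C_mul hσX hq two_ne_zero
    (by rcases hε₁ with rfl | rfl <;> rcases hε₂ with rfl | rfl <;> norm_num) hσf
  have ha₀ : a ≠ 0 := by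
    rintro rfl
    exact div_ne_zero h₁₀ h₁'₀ (by rwa [map_zero] at ha)
  rw [ha] at hι₁f hι₂f
  have hε₁' := RatFunc.eq_one_of_algEquiv_apply_C_eq_C_mul ha₀ hι₁f
  have hε₂' := RatFunc.eq_one_of_algEquiv_apply_C_eq_C_mul ha₀ hι₂f
  rcases hsign with rfl | rfl
  · norm_num at hε₁'
  · norm_num at hε₂'

theorem statement9 (q : ℂ) (hq : q ≠ 0) (hroot : ∀ n : ℕ, 1 ≤ n → q ^ n ≠ 1)
    (ι₁ ι₂ : RatFunc ℂ ≃ₐ[ℂ] RatFunc ℂ)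
    (hι₁ : ι₁ RatFunc.X = RatFunc.X⁻¹)
    (hι₂ : ι₂ RatFunc.X = RatFunc.C q * RatFunc.X⁻¹)
    (γ₁ γ₂ : RatFunc ℂ) (hγ₁ : γ₁ ≠ 0) (hγ₂ : γ₂ ≠ 0)
    (ε₁ ε₂ : ℂ) (hε₁ : ε₁ = 1 ∨ ε₁ = -1) (hε₂ : ε₂ = 1 ∨ ε₂ = -1)
    (hsign : ε₁ = 1 ∨ ε₂ = 1)
    (h₁' h₂' : RatFunc ℂ) (hne : ¬(h₁' = 0 ∧ h₂' = 0))
    (hrel' : γ₁ * h₁' + γ₂ * h₂' = 0)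
    (hs₁' : ι₁ h₁' = RatFunc.C ε₁ * h₁') (hs₂' : ι₂ h₂' = RatFunc.C ε₂ * h₂') :
    ∀ h₁ h₂ : RatFunc ℂ, γ₁ * h₁ + γ₂ * h₂ = 0 →
      ι₁ h₁ = -h₁ → ι₂ h₂ = -h₂ → h₁ = 0 ∧ h₂ = 0 :=
  statement9_general q hroot ι₁ ι₂ hι₁ hι₂ γ₁ γ₂ hγ₁ hγ₂ ε₁ ε₂ hε₁ hε₂ hsign h₁' h₂' hne hrel' hs₁'
    hs₂'
end

section
/- In the decoupling setting (see context), the following pole propagation holds. (i) If P ∈ ℂ ∖ {0} is a pole of h₁ and P ∉ ℒ₁⁻, then P/q is a pole of h₁. (ii) If P ∈ ℂ ∖ {0} is a pole of h₁ and P ∉ ℒ₁⁺, then q·P is a pole of h₁. (i') If P ∈ ℂ ∖ {0} is a pole of h₂ and P ∉ ℒ₂⁻, then P/q is a pole of h₂. (ii') If P ∈ ℂ ∖ {0} is a pole of h₂ and P ∉ ℒ₂⁺, then q·P is a pole of h₂. -/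
/-!
Solving the relation for `h₁` writes it as `γ₁⁻¹ (-γ₂ h₂ - ω)`; away from `0` and the zeros of
`γ₁`, every factor except `h₂` is regular, so a pole of `h₁` there is a pole of `h₂`, and
symmetrically with the roles of the indices exchanged. The invariances `h₁^{ι₁} = h₁` and
`h₂^{ι₂} = h₂` move a pole at `a` to one at `1/a`, resp. `q/a`. Chaining these moves, e.g.
`h₁ : P ⇝ h₂ : P ⇝ h₂ : q/P ⇝ h₁ : q/P ⇝ h₁ : P/q` for (i), gives all four claims; the critical
sets are exactly the points at which one of the transfers between `h₁` and `h₂` may fail.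
-/

noncomputable section

open Polynomial

namespace Polynomial

variable {K : Type*} [Field K]

theorem natDegree_comp_C_mul_X_le (p : K[X]) (c : K) :
    (p.comp (C c * X)).natDegree ≤ p.natDegree :=
  natDegree_comp_le.trans <| by
    simpa using Nat.mul_le_mul_left p.natDegree ((natDegree_C_mul_le c X).trans natDegree_X_le)

theorem algebraMap_reflect_comp_C_mul_X {p : K[X]} {N : ℕ} (hN : p.natDegree ≤ N) (c : K) :
    algebraMap K[X] (RatFunc K) (reflect N (p.comp (C c * X))) =
      RatFunc.X ^ N * aeval (RatFunc.C c * RatFunc.X⁻¹) p := by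
  have : Invertible (RatFunc.X⁻¹ : RatFunc K) := invertibleOfNonzero (inv_ne_zero RatFunc.X_ne_zero)
  have key := eval₂_reflect_mul_pow (algebraMap K (RatFunc K)) RatFunc.X⁻¹ N _
    ((natDegree_comp_C_mul_X_le p c).trans hN)
  rw [invOf_eq_inv, inv_inv, ← aeval_def, ← aeval_def, RatFunc.aeval_X_left_eq_algebraMap,
    aeval_comp, aeval_mul, aeval_C, aeval_X, RatFunc.algebraMap_eq_C, inv_pow] at key
  rw [← key, mul_comm (RatFunc.X ^ N), inv_mul_cancel_right₀ (pow_ne_zero N RatFunc.X_ne_zero)]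

theorem eval_reflect_comp_C_mul_X {p : K[X]} {N : ℕ} (hN : p.natDegree ≤ N) {a c : K}
    (ha : a ≠ 0) (hc : c ≠ 0) :
    (reflect N (p.comp (C c * X))).eval (c / a) * (a / c) ^ N = p.eval a := by
  have : Invertible (a / c) := invertibleOfNonzero (div_ne_zero ha hc)
  have key := eval₂_reflect_mul_pow (RingHom.id K) (a / c) N _
    ((natDegree_comp_C_mul_X_le p c).trans hN)
  rw [invOf_eq_inv, inv_div, ← eval, ← eval, eval_comp] at key
  simpa [mul_div_cancel₀ _ hc] using key

end Polynomial

theorem not_isPole_iff {h : RatFunc ℂ} {a : ℂ} :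
    ¬ IsPole h a ↔ ∃ p r : ℂ[X], r.eval a ≠ 0 ∧
      h = algebraMap ℂ[X] (RatFunc ℂ) p / algebraMap ℂ[X] (RatFunc ℂ) r := by
  refine ⟨fun hh ↦ ⟨h.num, h.denom, hh, (RatFunc.num_div_denom h).symm⟩, ?_⟩
  rintro ⟨p, r, hr, rfl⟩ hpole
  obtain ⟨t, ht⟩ := (RatFunc.denom_dvd (ne_zero_of_map (f := evalRingHom a) hr)).mpr ⟨p, rfl⟩
  exact hr (by rw [ht, eval_mul, hpole, zero_mul])

def regularAt (a : ℂ) : Subalgebra ℂ (RatFunc ℂ) where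
  carrier := {h | ¬ IsPole h a}
  mul_mem' := by
    rintro _ _ hu hv
    obtain ⟨p₁, r₁, hr₁, rfl⟩ := not_isPole_iff.mp hu
    obtain ⟨p₂, r₂, hr₂, rfl⟩ := not_isPole_iff.mp hv
    exact not_isPole_iff.mpr ⟨p₁ * p₂, r₁ * r₂, by simp [hr₁, hr₂], by
      rw [map_mul, map_mul, div_mul_div_comm]⟩
  add_mem' := by
    rintro _ _ hu hv
    obtain ⟨p₁, r₁, hr₁, rfl⟩ := not_isPole_iff.mp hu
    obtain ⟨p₂, r₂, hr₂, rfl⟩ := not_isPole_iff.mp hv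
    refine not_isPole_iff.mpr ⟨p₁ * r₂ + r₁ * p₂, r₁ * r₂, by simp [hr₁, hr₂], ?_⟩
    rw [div_add_div _ _ (RatFunc.algebraMap_ne_zero (ne_zero_of_map (f := evalRingHom a) hr₁))
      (RatFunc.algebraMap_ne_zero (ne_zero_of_map (f := evalRingHom a) hr₂))]
    simp only [map_add, map_mul]
  algebraMap_mem' c := not_isPole_iff.mpr ⟨C c, 1, by simp, by simp [RatFunc.algebraMap_C]⟩

theorem mem_regularAt {h : RatFunc ℂ} {a : ℂ} : h ∈ regularAt a ↔ ¬ IsPole h a := Iff.rfl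

theorem not_isPole_inv {g : RatFunc ℂ} {a : ℂ} (hg : ¬ IsZero g a) : ¬ IsPole g⁻¹ a :=
  not_isPole_iff.mpr ⟨g.denom, g.num, hg, by rw [← inv_div, RatFunc.num_div_denom]⟩

theorem IsPole.of_mul_add_mul_add_C_eq_zero {γ δ u v : RatFunc ℂ} {ω b : ℂ}
    (hrel : γ * u + δ * v + RatFunc.C ω = 0) (hγ : ¬ IsZero γ b) (hδ : ¬ IsPole δ b)
    (hu : IsPole u b) : IsPole v b := by
  by_contra hv
  have hγ₀ : γ ≠ 0 := by
    rintro rfl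
    exact hγ (by simp [IsZero])
  have hu_eq : u = γ⁻¹ * (-(δ * v) - algebraMap ℂ (RatFunc ℂ) ω) := by
    rw [RatFunc.algebraMap_eq_C, eq_inv_mul_iff_mul_eq₀ hγ₀]
    linear_combination hrel
  have hu_reg : u ∈ regularAt b := by
    rw [hu_eq]
    exact mul_mem (not_isPole_inv hγ)
      (sub_mem (neg_mem (mul_mem hδ hv)) (Subalgebra.algebraMap_mem _ ω))
  exact mem_regularAt.mp hu_reg hu

theorem not_isPole_map_of_map_X {F : Type*} [FunLike F (RatFunc ℂ) (RatFunc ℂ)]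
    [AlgHomClass F ℂ (RatFunc ℂ) (RatFunc ℂ)] {ι : F} {c : ℂ}
    (hι : ι RatFunc.X = RatFunc.C c * RatFunc.X⁻¹) (hc : c ≠ 0) {h : RatFunc ℂ} {a : ℂ}
    (ha : a ≠ 0) (hh : ¬ IsPole h a) : ¬ IsPole (ι h) (c / a) := by
  obtain ⟨p, r, hr, rfl⟩ := not_isPole_iff.mp hh
  set N := max p.natDegree r.natDegree
  have hpN : p.natDegree ≤ N := le_max_left _ _
  have hrN : r.natDegree ≤ N := le_max_right _ _
  refine not_isPole_iff.mpr
    ⟨reflect N (p.comp (C c * X)), reflect N (r.comp (C c * X)), fun h0 ↦ hr ?_, ?_⟩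
  · rw [← eval_reflect_comp_C_mul_X hrN ha hc, h0, zero_mul]
  · rw [map_div₀, algebraMap_reflect_comp_C_mul_X hpN, algebraMap_reflect_comp_C_mul_X hrN,
      mul_div_mul_left _ _ (pow_ne_zero _ RatFunc.X_ne_zero), ← hι,
      ← RatFunc.aeval_X_left_eq_algebraMap, ← RatFunc.aeval_X_left_eq_algebraMap,
      aeval_algHom_apply, aeval_algHom_apply]

theorem IsPole.of_map_eq_self {F : Type*} [FunLike F (RatFunc ℂ) (RatFunc ℂ)]
    [AlgHomClass F ℂ (RatFunc ℂ) (RatFunc ℂ)] {ι : F} {c : ℂ}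
    (hι : ι RatFunc.X = RatFunc.C c * RatFunc.X⁻¹) (hc : c ≠ 0) {h : RatFunc ℂ}
    (hfix : ι h = h) {a : ℂ} (ha : a ≠ 0) (hh : IsPole h a) : IsPole h (c / a) := by
  by_contra hnot
  have := not_isPole_map_of_map_X hι hc (div_ne_zero hc ha) hnot
  rw [hfix, div_div_cancel₀ hc] at this
  exact this hh

theorem pole_sets_propagate {A B : ℂ → Prop} {q P₁ P₂ P₃ P₄ : ℂ} (hq : q ≠ 0)
    (hA : ∀ a, a ≠ 0 → A a → A a⁻¹) (hB : ∀ a, a ≠ 0 → B a → B (q / a))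
    (hAB : ∀ b, b ≠ 0 → b ≠ P₁ → b ≠ P₂ → A b → B b)
    (hBA : ∀ b, b ≠ 0 → b ≠ P₃ → b ≠ P₄ → B b → A b) :
    (∀ P : ℂ, P ≠ 0 → A P → P ∉ ({P₁, P₂, q / P₃, q / P₄} : Set ℂ) → A (P / q)) ∧
    (∀ P : ℂ, P ≠ 0 → A P → P ∉ ({P₁⁻¹, P₂⁻¹, P₃ / q, P₄ / q} : Set ℂ) → A (q * P)) ∧
    (∀ P : ℂ, P ≠ 0 → B P → P ∉ ({q * P₁, q * P₂, q / P₃, q / P₄} : Set ℂ) → B (P / q)) ∧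
    (∀ P : ℂ, P ≠ 0 → B P → P ∉ ({P₁⁻¹, P₂⁻¹, P₃, P₄} : Set ℂ) → B (q * P)) := by
  simp only [Set.mem_insert_iff, Set.mem_singleton_iff, not_or]
  have hA_div : ∀ P, P ≠ 0 → A P →
      ¬P = P₁ ∧ ¬P = P₂ ∧ ¬P = q / P₃ ∧ ¬P = q / P₄ → A (P / q) := by
    rintro P hP hAP ⟨h₁, h₂, h₃, h₄⟩
    have hBqP := hB P hP (hAB P hP h₁ h₂ hAP)
    have hAqP := hBA (q / P) (div_ne_zero hq hP) (fun h ↦ h₃ (by rw [← h]; field_simp))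
      (fun h ↦ h₄ (by rw [← h]; field_simp)) hBqP
    simpa using hA _ (div_ne_zero hq hP) hAqP
  refine ⟨hA_div, ?_, ?_, ?_⟩
  · rintro P hP hAP ⟨h₁, h₂, h₃, h₄⟩
    have := hA_div P⁻¹ (inv_ne_zero hP) (hA P hP hAP)
      ⟨fun h ↦ h₁ (by rw [← h]; field_simp), fun h ↦ h₂ (by rw [← h]; field_simp),
        fun h ↦ h₃ (by rw [← inv_div, ← h, inv_inv]), fun h ↦ h₄ (by rw [← inv_div, ← h, inv_inv])⟩
    simpa [mul_comm] using hA _ (div_ne_zero (inv_ne_zero hP) hq) this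
  · rintro P hP hBP ⟨h₁, h₂, h₃, h₄⟩
    have hAqP := hBA (q / P) (div_ne_zero hq hP) (fun h ↦ h₃ (by rw [← h]; field_simp))
      (fun h ↦ h₄ (by rw [← h]; field_simp)) (hB P hP hBP)
    have hAPq : A (P / q) := by simpa using hA _ (div_ne_zero hq hP) hAqP
    exact hAB _ (div_ne_zero hP hq) (fun h ↦ h₁ (by rw [← h]; field_simp))
      (fun h ↦ h₂ (by rw [← h]; field_simp)) hAPq
  · rintro P hP hBP ⟨h₁, h₂, h₃, h₄⟩
    have hAinv := hA P hP (hBA P hP h₃ h₄ hBP)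
    have hBinv := hAB _ (inv_ne_zero hP) (fun h ↦ h₁ (by rw [← h]; field_simp))
      (fun h ↦ h₂ (by rw [← h]; field_simp)) hAinv
    simpa using hB _ (inv_ne_zero hP) hBinv

theorem statement11_general (q : ℂ) (hq : q ≠ 0)
    (ι₁ ι₂ : RatFunc ℂ ≃ₐ[ℂ] RatFunc ℂ)
    (hι₁ : ι₁ RatFunc.X = RatFunc.X⁻¹)
    (hι₂ : ι₂ RatFunc.X = RatFunc.C q * RatFunc.X⁻¹)
    (γ₁ γ₂ : RatFunc ℂ) (ω : ℂ)
    (P₁ P₂ P₃ P₄ : ℂ)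
    (hz₁ : ∀ a : ℂ, a ≠ 0 → IsZero γ₁ a → a = P₁ ∨ a = P₂)
    (hz₂ : ∀ a : ℂ, a ≠ 0 → IsZero γ₂ a → a = P₃ ∨ a = P₄)
    (hp₁ : ∀ a : ℂ, a ≠ 0 → ¬ IsPole γ₁ a)
    (hp₂ : ∀ a : ℂ, a ≠ 0 → ¬ IsPole γ₂ a)
    (h₁ h₂ : RatFunc ℂ)
    (hrel : γ₁ * h₁ + γ₂ * h₂ + RatFunc.C ω = 0)
    (hs₁ : ι₁ h₁ = h₁) (hs₂ : ι₂ h₂ = h₂) :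
    (∀ P : ℂ, P ≠ 0 → IsPole h₁ P →
        P ∉ ({P₁, P₂, q / P₃, q / P₄} : Set ℂ) → IsPole h₁ (P / q)) ∧
    (∀ P : ℂ, P ≠ 0 → IsPole h₁ P →
        P ∉ ({P₁⁻¹, P₂⁻¹, P₃ / q, P₄ / q} : Set ℂ) → IsPole h₁ (q * P)) ∧
    (∀ P : ℂ, P ≠ 0 → IsPole h₂ P →
        P ∉ ({q * P₁, q * P₂, q / P₃, q / P₄} : Set ℂ) → IsPole h₂ (P / q)) ∧
    (∀ P : ℂ, P ≠ 0 → IsPole h₂ P →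
        P ∉ ({P₁⁻¹, P₂⁻¹, P₃, P₄} : Set ℂ) → IsPole h₂ (q * P)) := by
  have hι₁' : ι₁ RatFunc.X = RatFunc.C 1 * RatFunc.X⁻¹ := by rw [hι₁, map_one, one_mul]
  refine pole_sets_propagate hq (fun a ha hpole ↦ ?_)
    (fun a ha hpole ↦ hpole.of_map_eq_self hι₂ hq hs₂ ha) (fun b hb hb₁ hb₂ hpole ↦ ?_)
    (fun b hb hb₃ hb₄ hpole ↦ ?_)
  · simpa using hpole.of_map_eq_self hι₁' one_ne_zero hs₁ ha
  · exact hpole.of_mul_add_mul_add_C_eq_zero hrel (fun hz ↦ (hz₁ b hb hz).elim hb₁ hb₂) (hp₂ b hb)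
  · exact hpole.of_mul_add_mul_add_C_eq_zero (by linear_combination hrel)
      (fun hz ↦ (hz₂ b hb hz).elim hb₃ hb₄) (hp₁ b hb)

theorem statement11 (q : ℂ) (hq : q ≠ 0)
    (ι₁ ι₂ : RatFunc ℂ ≃ₐ[ℂ] RatFunc ℂ)
    (hι₁ : ι₁ RatFunc.X = RatFunc.X⁻¹)
    (hι₂ : ι₂ RatFunc.X = RatFunc.C q * RatFunc.X⁻¹)
    (γ₁ γ₂ : RatFunc ℂ) (hγ₁ : γ₁ ≠ 0) (hγ₂ : γ₂ ≠ 0) (ω : ℂ)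
    (P₁ P₂ P₃ P₄ : ℂ) (hP₁ : P₁ ≠ 0) (hP₂ : P₂ ≠ 0) (hP₃ : P₃ ≠ 0) (hP₄ : P₄ ≠ 0)
    (hz₁ : ∀ a : ℂ, a ≠ 0 → IsZero γ₁ a → a = P₁ ∨ a = P₂)
    (hz₂ : ∀ a : ℂ, a ≠ 0 → IsZero γ₂ a → a = P₃ ∨ a = P₄)
    (hp₁ : ∀ a : ℂ, a ≠ 0 → ¬ IsPole γ₁ a)
    (hp₂ : ∀ a : ℂ, a ≠ 0 → ¬ IsPole γ₂ a)
    (h₁ h₂ : RatFunc ℂ)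
    (hrel : γ₁ * h₁ + γ₂ * h₂ + RatFunc.C ω = 0)
    (hs₁ : ι₁ h₁ = h₁) (hs₂ : ι₂ h₂ = h₂) :
    (∀ P : ℂ, P ≠ 0 → IsPole h₁ P →
        P ∉ ({P₁, P₂, q / P₃, q / P₄} : Set ℂ) → IsPole h₁ (P / q)) ∧
    (∀ P : ℂ, P ≠ 0 → IsPole h₁ P →
        P ∉ ({P₁⁻¹, P₂⁻¹, P₃ / q, P₄ / q} : Set ℂ) → IsPole h₁ (q * P)) ∧
    (∀ P : ℂ, P ≠ 0 → IsPole h₂ P →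
        P ∉ ({q * P₁, q * P₂, q / P₃, q / P₄} : Set ℂ) → IsPole h₂ (P / q)) ∧
    (∀ P : ℂ, P ≠ 0 → IsPole h₂ P →
        P ∉ ({P₁⁻¹, P₂⁻¹, P₃, P₄} : Set ℂ) → IsPole h₂ (q * P)) :=
  statement11_general q hq ι₁ ι₂ hι₁ hι₂ γ₁ γ₂ ω P₁ P₂ P₃ P₄ hz₁ hz₂ hp₁ hp₂ h₁ h₂ hrel hs₁ hs₂
end
end

section
/- In the decoupling setting (see context), assume moreover that q is not a root of unity (qⁿ ≠ 1 for all n ≥ 1). If P ∈ ℂ ∖ {0} is a pole of h₁, then there exist integers m, n ≥ 0 such that q^{−m}·P ∈ ℒ₁⁻ and qⁿ·P ∈ ℒ₁⁺. Likewise, if P ∈ ℂ ∖ {0} is a pole of h₂, then there exist integers m, n ≥ 0 such that q^{−m}·P ∈ ℒ₂⁻ and qⁿ·P ∈ ℒ₂⁺. -/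
/-!
Statement 12: in the decoupling setting, with q not a root of unity, every pole
P ∈ ℂ ∖ {0} of h₁ (resp. h₂) is sandwiched between the critical sets: some backward
iterate q^{−m}·P lies in ℒ₁⁻ (resp. ℒ₂⁻) and some forward iterate qⁿ·P lies in ℒ₁⁺
(resp. ℒ₂⁺).
-/

noncomputable section

namespace St12

open Polynomial

abbrev am : Polynomial ℂ →+* RatFunc ℂ := algebraMap (Polynomial ℂ) (RatFunc ℂ)

/-- Regularity at a point. -/
def Reg (a : ℂ) (f : RatFunc ℂ) : Prop :=
  ∃ p r : Polynomial ℂ, r.eval a ≠ 0 ∧ f * am r = am p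

lemma reg_iff (f : RatFunc ℂ) (a : ℂ) : Reg a f ↔ ¬ IsPole f a := by
  constructor
  · rintro ⟨p, r, hr, hpr⟩ hpole
    have hd : am f.denom ≠ 0 := RatFunc.algebraMap_ne_zero (RatFunc.denom_ne_zero f)
    have key : am f.num = f * am f.denom := (div_eq_iff hd).mp (RatFunc.num_div_denom f)
    have : am (f.num * r) = am (p * f.denom) := by
      rw [map_mul, map_mul]
      linear_combination am r * key + am f.denom * hpr
    have heq : f.num * r = p * f.denom := RatFunc.algebraMap_injective ℂ this
    have hdvd : f.denom ∣ r := by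
      have h1 : f.denom ∣ r * f.num := ⟨p, by linear_combination heq⟩
      exact (RatFunc.isCoprime_num_denom f).symm.dvd_of_dvd_mul_right h1
    obtain ⟨u, hu⟩ := hdvd
    apply hr
    rw [hu, eval_mul, hpole, zero_mul]
  · intro h
    have hd : am f.denom ≠ 0 := RatFunc.algebraMap_ne_zero (RatFunc.denom_ne_zero f)
    exact ⟨f.num, f.denom, h, ((div_eq_iff hd).mp (RatFunc.num_div_denom f)).symm⟩

lemma reg_add {a : ℂ} {f g : RatFunc ℂ} (hf : Reg a f) (hg : Reg a g) : Reg a (f + g) := by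
  obtain ⟨p1, r1, h1, e1⟩ := hf
  obtain ⟨p2, r2, h2, e2⟩ := hg
  exact ⟨p1 * r2 + p2 * r1, r1 * r2, by simp [h1, h2], by
    simp only [map_mul, map_add]
    linear_combination am r2 * e1 + am r1 * e2⟩

lemma reg_mul {a : ℂ} {f g : RatFunc ℂ} (hf : Reg a f) (hg : Reg a g) : Reg a (f * g) := by
  obtain ⟨p1, r1, h1, e1⟩ := hf
  obtain ⟨p2, r2, h2, e2⟩ := hg
  exact ⟨p1 * p2, r1 * r2, by simp [h1, h2], by
    simp only [map_mul]
    linear_combination am r2 * g * e1 + am p1 * e2⟩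

lemma reg_neg {a : ℂ} {f : RatFunc ℂ} (hf : Reg a f) : Reg a (-f) := by
  obtain ⟨p, r, h, e⟩ := hf
  exact ⟨-p, r, h, by simp only [map_neg]; linear_combination -e⟩

lemma reg_C (a : ℂ) (c : ℂ) : Reg a (RatFunc.C c) :=
  ⟨Polynomial.C c, 1, by simp, by simp [RatFunc.algebraMap_C]⟩

lemma reg_inv {a : ℂ} {f : RatFunc ℂ} (hf : f ≠ 0) (hn : f.num.eval a ≠ 0) :
    Reg a f⁻¹ := by
  have hd : am f.denom ≠ 0 := RatFunc.algebraMap_ne_zero (RatFunc.denom_ne_zero f)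
  have e : f * am f.denom = am f.num := ((div_eq_iff hd).mp (RatFunc.num_div_denom f)).symm
  refine ⟨f.denom, f.num, hn, ?_⟩
  rw [← e, inv_mul_cancel_left₀ hf]


lemma am_eq_aeval (g : Polynomial ℂ) : am g = aeval (RatFunc.X) g := by
  have := Polynomial.aeval_algHom_apply
    (IsScalarTower.toAlgHom ℂ (Polynomial ℂ) (RatFunc ℂ)) Polynomial.X g
  simpa [Polynomial.aeval_X_left_apply, RatFunc.algebraMap_X] using this.symm

lemma reflect_key (g : Polynomial ℂ) (N : ℕ) (hN : g.natDegree ≤ N) :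
    am (reflect N g) = RatFunc.X ^ N * aeval (RatFunc.X⁻¹ : RatFunc ℂ) g := by
  haveI : Invertible (RatFunc.X⁻¹ : RatFunc ℂ) :=
    invertibleOfNonzero (inv_ne_zero RatFunc.X_ne_zero)
  have h := Polynomial.eval₂_reflect_mul_pow (algebraMap ℂ (RatFunc ℂ))
    (RatFunc.X⁻¹ : RatFunc ℂ) N g hN
  rw [invOf_eq_inv, inv_inv] at h
  rw [← Polynomial.aeval_def, ← Polynomial.aeval_def, ← am_eq_aeval] at h
  have hX : (RatFunc.X : RatFunc ℂ) ^ N ≠ 0 := pow_ne_zero _ RatFunc.X_ne_zero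
  rw [← h, inv_pow]
  field_simp

lemma reflect_eval_ne {g : Polynomial ℂ} {b : ℂ} (hb : b ≠ 0) (N : ℕ)
    (hN : g.natDegree ≤ N) (h : g.eval b⁻¹ ≠ 0) : (reflect N g).eval b ≠ 0 := by
  haveI : Invertible (b⁻¹) := invertibleOfNonzero (inv_ne_zero hb)
  have key := Polynomial.eval₂_reflect_eq_zero_iff (RingHom.id ℂ) b⁻¹ N g hN
  rw [invOf_eq_inv, inv_inv] at key
  exact fun hz => h (key.mp hz)

lemma reg_transport {c a : ℂ} (hc : c ≠ 0) (ha : a ≠ 0)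
    (φ : RatFunc ℂ ≃ₐ[ℂ] RatFunc ℂ) (hφ : φ RatFunc.X = RatFunc.C c * RatFunc.X⁻¹)
    {f : RatFunc ℂ} (hf : φ f = f) (h : Reg a f) : Reg (c * a⁻¹) f := by
  obtain ⟨p, r, hr, e⟩ := h
  have key : ∀ g : Polynomial ℂ, φ (am g) =
      aeval (RatFunc.X⁻¹ : RatFunc ℂ) (g.comp (Polynomial.C c * Polynomial.X)) := by
    intro g
    rw [am_eq_aeval, ← Polynomial.aeval_algHom_apply φ, Polynomial.aeval_comp]
    congr 1
    simp [hφ, RatFunc.algebraMap_eq_C]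
  set p₂ := p.comp (Polynomial.C c * Polynomial.X) with hp₂
  set r₂ := r.comp (Polynomial.C c * Polynomial.X) with hr₂
  set N := max p₂.natDegree r₂.natDegree with hNdef
  have e2 : f * aeval (RatFunc.X⁻¹ : RatFunc ℂ) r₂ = aeval (RatFunc.X⁻¹ : RatFunc ℂ) p₂ := by
    have h3 := congrArg φ e
    rw [map_mul, hf, key, key] at h3; exact h3
  refine ⟨reflect N p₂, reflect N r₂, ?_, ?_⟩
  · apply reflect_eval_ne (mul_ne_zero hc (inv_ne_zero ha)) N (le_max_right _ _)
    rw [hr₂, Polynomial.eval_comp]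
    simp only [Polynomial.eval_mul, Polynomial.eval_C, Polynomial.eval_X]
    have hca : c * (c * a⁻¹)⁻¹ = a := by field_simp
    rw [hca]; exact hr
  · rw [reflect_key r₂ N (le_max_right _ _), reflect_key p₂ N (le_max_left _ _), ← e2]
    ring

lemma pole_sym {c a : ℂ} (hc : c ≠ 0) (ha : a ≠ 0)
    (φ : RatFunc ℂ ≃ₐ[ℂ] RatFunc ℂ) (hφ : φ RatFunc.X = RatFunc.C c * RatFunc.X⁻¹)
    {f : RatFunc ℂ} (hf : φ f = f) (h : IsPole f a) : IsPole f (c * a⁻¹) := by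
  by_contra hreg
  have h1 : Reg (c * a⁻¹) f := (reg_iff f _).mpr hreg
  have h2 := reg_transport hc (mul_ne_zero hc (inv_ne_zero ha)) φ hφ hf h1
  have hca : c * (c * a⁻¹)⁻¹ = a := by field_simp
  rw [hca] at h2
  exact ((reg_iff f a).mp h2) h

lemma transfer {a ω : ℂ} {γ δ f g : RatFunc ℂ} (hγ0 : γ ≠ 0)
    (hrel : γ * f + δ * g + RatFunc.C ω = 0)
    (hδ : Reg a δ) (hγnum : γ.num.eval a ≠ 0)
    (hf : IsPole f a) : IsPole g a := by
  by_contra hg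
  have rg : Reg a g := (reg_iff g a).mpr hg
  have r1 : Reg a (γ * f) := by
    have hgf : γ * f = -(δ * g) + -(RatFunc.C ω) := by linear_combination hrel
    rw [hgf]
    exact reg_add (reg_neg (reg_mul hδ rg)) (reg_neg (reg_C a ω))
  have r2 : Reg a f := by
    have hgf : f = γ⁻¹ * (γ * f) := by field_simp
    rw [hgf]; exact reg_mul (reg_inv hγ0 hγnum) r1
  exact ((reg_iff f a).mp r2) hf

lemma escape {u : ℂ} (hu : u ≠ 0) (hu1 : ∀ n : ℕ, 1 ≤ n → u ^ n ≠ 1)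
    {pred : ℂ → Prop} (hfin : {x | pred x}.Finite) {S : Set ℂ}
    (step : ∀ x, x ≠ 0 → pred x → x ∉ S → pred (u * x))
    {P : ℂ} (hP : P ≠ 0) (h : pred P) : ∃ m : ℕ, u ^ m * P ∈ S := by
  by_contra hcon
  push_neg at hcon
  have hall : ∀ m : ℕ, pred (u ^ m * P) := by
    intro m
    induction m with
    | zero => simpa using h
    | succ n ih =>
      have hx : u ^ n * P ≠ 0 := mul_ne_zero (pow_ne_zero _ hu) hP
      have hs := step _ hx ih (hcon n)
      rw [← mul_assoc, ← pow_succ'] at hs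
      exact hs
  have key : ∀ m n : ℕ, m < n → u ^ m ≠ u ^ n := by
    intro m n hlt heq
    apply hu1 (n - m) (by omega)
    apply mul_left_cancel₀ (pow_ne_zero m hu)
    rw [mul_one, ← pow_add]
    rw [show m + (n - m) = n by omega]
    exact heq.symm
  have hinj : Function.Injective (fun m : ℕ => u ^ m * P) := by
    intro m n hmn
    simp only at hmn
    have hpow : u ^ m = u ^ n := mul_right_cancel₀ hP hmn
    rcases lt_trichotomy m n with hlt | heq | hgt
    · exact absurd hpow (key m n hlt)
    · exact heq
    · exact absurd hpow.symm (key n m hgt)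
  exact (Set.infinite_of_injective_forall_mem hinj hall) hfin

end St12


open St12 in
theorem statement12 (q : ℂ) (hq : q ≠ 0) (hroot : ∀ n : ℕ, 1 ≤ n → q ^ n ≠ 1)
    (ι₁ ι₂ : RatFunc ℂ ≃ₐ[ℂ] RatFunc ℂ)
    (hι₁ : ι₁ RatFunc.X = RatFunc.X⁻¹)
    (hι₂ : ι₂ RatFunc.X = RatFunc.C q * RatFunc.X⁻¹)
    (γ₁ γ₂ : RatFunc ℂ) (hγ₁ : γ₁ ≠ 0) (hγ₂ : γ₂ ≠ 0) (ω : ℂ)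
    (P₁ P₂ P₃ P₄ : ℂ) (hP₁ : P₁ ≠ 0) (hP₂ : P₂ ≠ 0) (hP₃ : P₃ ≠ 0) (hP₄ : P₄ ≠ 0)
    (hz₁ : ∀ a : ℂ, a ≠ 0 → IsZero γ₁ a → a = P₁ ∨ a = P₂)
    (hz₂ : ∀ a : ℂ, a ≠ 0 → IsZero γ₂ a → a = P₃ ∨ a = P₄)
    (hp₁ : ∀ a : ℂ, a ≠ 0 → ¬ IsPole γ₁ a)
    (hp₂ : ∀ a : ℂ, a ≠ 0 → ¬ IsPole γ₂ a)
    (h₁ h₂ : RatFunc ℂ)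
    (hrel : γ₁ * h₁ + γ₂ * h₂ + RatFunc.C ω = 0)
    (hs₁ : ι₁ h₁ = h₁) (hs₂ : ι₂ h₂ = h₂) :
    (∀ P : ℂ, P ≠ 0 → IsPole h₁ P →
        ∃ m n : ℕ, q ^ (-(m : ℤ)) * P ∈ ({P₁, P₂, q / P₃, q / P₄} : Set ℂ) ∧
          q ^ n * P ∈ ({P₁⁻¹, P₂⁻¹, P₃ / q, P₄ / q} : Set ℂ)) ∧
    (∀ P : ℂ, P ≠ 0 → IsPole h₂ P →
        ∃ m n : ℕ, q ^ (-(m : ℤ)) * P ∈ ({q * P₁, q * P₂, q / P₃, q / P₄} : Set ℂ) ∧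
          q ^ n * P ∈ ({P₁⁻¹, P₂⁻¹, P₃, P₄} : Set ℂ)) := by
  have hrel' : γ₂ * h₂ + γ₁ * h₁ + RatFunc.C ω = 0 := by linear_combination hrel
  have hι₁' : ι₁ RatFunc.X = RatFunc.C (1 : ℂ) * RatFunc.X⁻¹ := by
    rw [hι₁, map_one, one_mul]
  -- symmetry of pole sets
  have sym1 : ∀ a : ℂ, a ≠ 0 → IsPole h₁ a → IsPole h₁ a⁻¹ := by
    intro a ha h
    have := pole_sym one_ne_zero ha ι₁ hι₁' hs₁ h
    rwa [one_mul] at this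
  have sym2 : ∀ a : ℂ, a ≠ 0 → IsPole h₂ a → IsPole h₂ (q * a⁻¹) :=
    fun a ha h => pole_sym hq ha ι₂ hι₂ hs₂ h
  -- transfer of poles between h₁ and h₂
  have t12 : ∀ a : ℂ, a ≠ 0 → a ≠ P₁ → a ≠ P₂ → IsPole h₁ a → IsPole h₂ a := by
    intro a ha n1 n2 hp
    have hγnum : γ₁.num.eval a ≠ 0 := by
      intro hzero
      rcases hz₁ a ha hzero with h | h
      · exact n1 h
      · exact n2 h
    exact transfer hγ₁ hrel ((reg_iff _ _).mpr (hp₂ a ha)) hγnum hp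
  have t21 : ∀ a : ℂ, a ≠ 0 → a ≠ P₃ → a ≠ P₄ → IsPole h₂ a → IsPole h₁ a := by
    intro a ha n3 n4 hp
    have hγnum : γ₂.num.eval a ≠ 0 := by
      intro hzero
      rcases hz₂ a ha hzero with h | h
      · exact n3 h
      · exact n4 h
    exact transfer hγ₂ hrel' ((reg_iff _ _).mpr (hp₁ a ha)) hγnum hp
  -- the four step lemmas
  have step1b : ∀ x : ℂ, x ≠ 0 → IsPole h₁ x →
      x ∉ ({P₁, P₂, q / P₃, q / P₄} : Set ℂ) → IsPole h₁ (q⁻¹ * x) := by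
    intro x hx hp hnot
    simp only [Set.mem_insert_iff, Set.mem_singleton_iff, not_or] at hnot
    obtain ⟨n1, n2, n3, n4⟩ := hnot
    have h2 : IsPole h₂ x := t12 x hx n1 n2 hp
    have h3 : IsPole h₂ (q * x⁻¹) := sym2 x hx h2
    have hy : q * x⁻¹ ≠ 0 := mul_ne_zero hq (inv_ne_zero hx)
    have hy3 : q * x⁻¹ ≠ P₃ := by
      intro h; apply n3
      rw [eq_div_iff hP₃]
      field_simp at h
      linear_combination -h
    have hy4 : q * x⁻¹ ≠ P₄ := by
      intro h; apply n4
      rw [eq_div_iff hP₄]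
      field_simp at h
      linear_combination -h
    have h4 : IsPole h₁ (q * x⁻¹) := t21 _ hy hy3 hy4 h3
    have h5 : IsPole h₁ ((q * x⁻¹)⁻¹) := sym1 _ hy h4
    rwa [mul_inv, inv_inv] at h5
  have step1f : ∀ x : ℂ, x ≠ 0 → IsPole h₁ x →
      x ∉ ({P₁⁻¹, P₂⁻¹, P₃ / q, P₄ / q} : Set ℂ) → IsPole h₁ (q * x) := by
    intro x hx hp hnot
    simp only [Set.mem_insert_iff, Set.mem_singleton_iff, not_or] at hnot
    obtain ⟨n1, n2, n3, n4⟩ := hnot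
    have h1 : IsPole h₁ x⁻¹ := sym1 x hx hp
    have hix : (x⁻¹ : ℂ) ≠ 0 := inv_ne_zero hx
    have m1 : x⁻¹ ≠ P₁ := fun h => n1 (by rw [← h, inv_inv])
    have m2 : x⁻¹ ≠ P₂ := fun h => n2 (by rw [← h, inv_inv])
    have h2 : IsPole h₂ x⁻¹ := t12 _ hix m1 m2 h1
    have h3 : IsPole h₂ (q * x⁻¹⁻¹) := sym2 _ hix h2
    rw [inv_inv] at h3
    have hy : q * x ≠ 0 := mul_ne_zero hq hx
    have m3 : q * x ≠ P₃ := by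
      intro h; apply n3
      rw [eq_div_iff hq]
      linear_combination h
    have m4 : q * x ≠ P₄ := by
      intro h; apply n4
      rw [eq_div_iff hq]
      linear_combination h
    exact t21 _ hy m3 m4 h3
  have step2b : ∀ x : ℂ, x ≠ 0 → IsPole h₂ x →
      x ∉ ({q * P₁, q * P₂, q / P₃, q / P₄} : Set ℂ) → IsPole h₂ (q⁻¹ * x) := by
    intro x hx hp hnot
    simp only [Set.mem_insert_iff, Set.mem_singleton_iff, not_or] at hnot
    obtain ⟨n1, n2, n3, n4⟩ := hnot
    have h1 : IsPole h₂ (q * x⁻¹) := sym2 x hx hp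
    have hy : q * x⁻¹ ≠ 0 := mul_ne_zero hq (inv_ne_zero hx)
    have m3 : q * x⁻¹ ≠ P₃ := by
      intro h; apply n3
      rw [eq_div_iff hP₃]
      field_simp at h
      linear_combination -h
    have m4 : q * x⁻¹ ≠ P₄ := by
      intro h; apply n4
      rw [eq_div_iff hP₄]
      field_simp at h
      linear_combination -h
    have h2 : IsPole h₁ (q * x⁻¹) := t21 _ hy m3 m4 h1
    have h3 : IsPole h₁ ((q * x⁻¹)⁻¹) := sym1 _ hy h2
    rw [mul_inv, inv_inv] at h3
    have hz : q⁻¹ * x ≠ 0 := mul_ne_zero (inv_ne_zero hq) hx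
    have m1 : q⁻¹ * x ≠ P₁ := by
      intro h; apply n1
      field_simp at h
      linear_combination h
    have m2 : q⁻¹ * x ≠ P₂ := by
      intro h; apply n2
      field_simp at h
      linear_combination h
    exact t12 _ hz m1 m2 h3
  have step2f : ∀ x : ℂ, x ≠ 0 → IsPole h₂ x →
      x ∉ ({P₁⁻¹, P₂⁻¹, P₃, P₄} : Set ℂ) → IsPole h₂ (q * x) := by
    intro x hx hp hnot
    simp only [Set.mem_insert_iff, Set.mem_singleton_iff, not_or] at hnot
    obtain ⟨n1, n2, n3, n4⟩ := hnot
    have h1 : IsPole h₁ x := t21 x hx n3 n4 hp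
    have h2 : IsPole h₁ x⁻¹ := sym1 x hx h1
    have hix : (x⁻¹ : ℂ) ≠ 0 := inv_ne_zero hx
    have m1 : x⁻¹ ≠ P₁ := fun h => n1 (by rw [← h, inv_inv])
    have m2 : x⁻¹ ≠ P₂ := fun h => n2 (by rw [← h, inv_inv])
    have h3 : IsPole h₂ x⁻¹ := t12 _ hix m1 m2 h2
    have h4 : IsPole h₂ (q * x⁻¹⁻¹) := sym2 _ hix h3
    rwa [inv_inv] at h4
  -- finiteness of pole sets
  have hfin1 : {x : ℂ | IsPole h₁ x}.Finite :=
    Polynomial.finite_setOf_isRoot (RatFunc.denom_ne_zero h₁)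
  have hfin2 : {x : ℂ | IsPole h₂ x}.Finite :=
    Polynomial.finite_setOf_isRoot (RatFunc.denom_ne_zero h₂)
  have hqi : (q⁻¹ : ℂ) ≠ 0 := inv_ne_zero hq
  have hrooti : ∀ n : ℕ, 1 ≤ n → (q⁻¹) ^ n ≠ 1 := by
    intro n hn h
    rw [inv_pow, inv_eq_one] at h
    exact hroot n hn h
  have hzpow : ∀ (m : ℕ) (P : ℂ), q ^ (-(m : ℤ)) * P = (q⁻¹) ^ m * P := by
    intro m P
    rw [zpow_neg, zpow_natCast, inv_pow]
  constructor
  · intro P hP hpole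
    obtain ⟨m, hm⟩ := escape hqi hrooti hfin1 step1b hP hpole
    obtain ⟨n, hn⟩ := escape hq hroot hfin1 step1f hP hpole
    exact ⟨m, n, by rw [hzpow]; exact hm, hn⟩
  · intro P hP hpole
    obtain ⟨m, hm⟩ := escape hqi hrooti hfin2 step2b hP hpole
    obtain ⟨n, hn⟩ := escape hq hroot hfin2 step2f hP hpole
    exact ⟨m, n, by rw [hzpow]; exact hm, hn⟩

end
end

section
/- In the decoupling setting (see context), assume moreover that q is not a root of unity (qⁿ ≠ 1 for all n ≥ 1). (i) If for all Q⁻ ∈ ℒ₁⁻, all Q⁺ ∈ ℒ₁⁺ and all integers n ≥ 0 one has qⁿ·Q⁻ ≠ Q⁺, then h₁ has no pole at any point of ℂ ∖ {0}. (ii) If for all Q⁻ ∈ ℒ₂⁻, all Q⁺ ∈ ℒ₂⁺ and all integers n ≥ 0 one has qⁿ·Q⁻ ≠ Q⁺, then h₂ has no pole at any point of ℂ ∖ {0}. -/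
/-!
Away from `0`, the relation `γ₁ h₁ + γ₂ h₂ + ω = 0` makes every pole of `h₁` a pole of `h₂` unless
it is a zero of `γ₁` (hence `P₁` or `P₂`), and every pole of `h₂` a pole of `h₁` unless it is
`P₃` or `P₄`; the invariances make the poles of `h₁` stable under `s ↦ 1/s` and those of `h₂`
under `s ↦ q/s`. Composing, a pole `b` of `h₁` gives the pole `q b` unless `b ∈ ℒ₁⁺`, and the
pole `b / q` unless `b ∈ ℒ₁⁻`. There are finitely many poles and `q` has infinite order, so both
chains starting at `b` must stop: `qⁿ b ∈ ℒ₁⁺` and `q⁻ᵐ b ∈ ℒ₁⁻`, which the hypothesis forbids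
(exponent `n + m`). For `h₂` exchange the roles of the two halves.
-/

noncomputable section

open Polynomial Function

theorem Set.Finite.exists_pow_mul_mem {M : Type*} [Monoid M] {S L : Set M} {q a : M}
    (hS : S.Finite) (hstep : ∀ b ∈ S, b ∈ L ∨ q * b ∈ S) (ha : a ∈ S)
    (hinj : Injective fun n : ℕ => q ^ n * a) : ∃ n, q ^ n * a ∈ L := by
  by_contra! hL
  have hmem (n : ℕ) : q ^ n * a ∈ S := by
    induction n with
    | zero => simpa using ha
    | succ n ih =>
      rw [pow_succ', mul_assoc]
      exact (hstep _ ih).resolve_left (hL n)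
  exact hS.not_infinite (Set.infinite_of_injective_forall_mem hinj hmem)

theorem injective_pow_mul {G₀ : Type*} [GroupWithZero G₀] {q a : G₀} (hq : q ≠ 0)
    (hq1 : ∀ n, 0 < n → q ^ n ≠ 1) (ha : a ≠ 0) : Injective fun n : ℕ => q ^ n * a := by
  have hfin : ¬IsOfFinOrder (Units.mk0 q hq) := by
    rw [isOfFinOrder_iff_pow_eq_one]
    rintro ⟨n, hn, h⟩
    exact hq1 n hn (by simpa [Units.ext_iff] using h)
  intro n m h
  exact injective_pow_iff_not_isOfFinOrder.mpr hfin
    (Units.ext (by simpa using mul_right_cancel₀ ha h))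

/-- For `pᵢ a` meaning "`a` is a pole of `hᵢ`", `A`, `B` the allowed zeros of `γ₁`, `γ₂` and
`c₁ = 1`, `c₂ = q`, the two sets in `hsep` are `ℒ₁⁻` and `ℒ₁⁺`. -/
theorem eq_zero_of_pole_propagation {K : Type*} [Field K] {p₁ p₂ : K → Prop} {A B : Set K}
    {c₁ c₂ : K} (hc₁ : c₁ ≠ 0) (hc₂ : c₂ ≠ 0) (hc : ∀ n, 0 < n → c₁ ^ n ≠ c₂ ^ n)
    (hfin : {a | p₁ a}.Finite)
    (h₁₂ : ∀ a ≠ 0, p₁ a → a ∈ A ∨ p₂ a) (h₂₁ : ∀ a ≠ 0, p₂ a → a ∈ B ∨ p₁ a)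
    (hr₁ : ∀ a ≠ 0, p₁ a → p₁ (c₁ / a)) (hr₂ : ∀ a ≠ 0, p₂ a → p₂ (c₂ / a))
    (hsep : ∀ Qm ∈ A ∪ (c₂ / ·) '' B, ∀ Qp ∈ (c₁ / ·) '' A ∪ (fun b => c₁ * b / c₂) '' B,
      ∀ n : ℕ, c₂ ^ n * Qm ≠ c₁ ^ n * Qp)
    {a : K} (ha : p₁ a) : a = 0 := by
  by_contra ha0
  set S := {b | b ≠ 0 ∧ p₁ b}
  have hstep : ∀ b ∈ S,
      b ∈ (c₁ / ·) '' A ∪ (fun b => c₁ * b / c₂) '' B ∨ c₂ / c₁ * b ∈ S := by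
    rintro b ⟨hb, hpb⟩
    have hb' : c₁ / b ≠ 0 := div_ne_zero hc₁ hb
    rcases h₁₂ _ hb' (hr₁ b hb hpb) with hA | hp₂
    · exact .inl (.inl ⟨_, hA, div_div_cancel₀ hc₁⟩)
    have hqb : c₂ / (c₁ / b) = c₂ / c₁ * b := by field_simp
    have hqb0 : c₂ / c₁ * b ≠ 0 := mul_ne_zero (div_ne_zero hc₂ hc₁) hb
    rcases h₂₁ _ hqb0 (hqb ▸ hr₂ _ hb' hp₂) with hB | hp₁
    · exact .inl (.inr ⟨_, hB, by field_simp⟩)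
    · exact .inr ⟨hqb0, hp₁⟩
  have hq1 (n : ℕ) (hn : 0 < n) : (c₂ / c₁) ^ n ≠ 1 := by
    rw [div_pow, Ne, div_eq_one_iff_eq (pow_ne_zero n hc₁)]
    exact (hc n hn).symm
  have hinj {b : K} (hb : b ≠ 0) := injective_pow_mul (div_ne_zero hc₂ hc₁) hq1 hb
  have hS : S.Finite := hfin.subset fun b hb => hb.2
  obtain ⟨n, hn⟩ := hS.exists_pow_mul_mem hstep ⟨ha0, ha⟩ (hinj ha0)
  -- the forward chain from the reflected point `c₁ / a` runs backward from `a`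
  obtain ⟨m, hm⟩ := hS.exists_pow_mul_mem hstep
    ⟨div_ne_zero hc₁ ha0, hr₁ a ha0 ha⟩ (hinj (div_ne_zero hc₁ ha0))
  have hm' : c₁ / ((c₂ / c₁) ^ m * (c₁ / a)) ∈ A ∪ (c₂ / ·) '' B := by
    rcases hm with ⟨x, hx, hx'⟩ | ⟨x, hx, hx'⟩
    · rw [← hx', div_div_cancel₀ hc₁]
      exact .inl hx
    · rw [← hx', div_div_eq_mul_div, mul_div_mul_left _ _ hc₁]
      exact .inr ⟨x, hx, rfl⟩
  exact hsep _ hm' _ hn (n + m) (by rw [div_pow, div_pow]; field_simp; ring)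

theorem Polynomial.eval_reverse_ne_zero {K : Type*} [Field K] {a : K} {r : K[X]} (ha : a ≠ 0)
    (hr : r.eval a⁻¹ ≠ 0) : r.reverse.eval a ≠ 0 := by
  let : Invertible a⁻¹ := invertibleOfNonzero (inv_ne_zero ha)
  simpa using (eval₂_reverse_eq_zero_iff (RingHom.id K) a⁻¹ r).not.mpr hr

namespace RatFunc

variable {K : Type*} [Field K]

def regularAt (a : K) : Subalgebra K (RatFunc K) where
  carrier := {f | ∃ p r : K[X], r.eval a ≠ 0 ∧
    f = algebraMap K[X] (RatFunc K) p / algebraMap K[X] (RatFunc K) r}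
  mul_mem' := by
    rintro _ _ ⟨p₁, r₁, hr₁, rfl⟩ ⟨p₂, r₂, hr₂, rfl⟩
    exact ⟨p₁ * p₂, r₁ * r₂, by simp [hr₁, hr₂], by rw [map_mul, map_mul, div_mul_div_comm]⟩
  add_mem' := by
    rintro _ _ ⟨p₁, r₁, hr₁, rfl⟩ ⟨p₂, r₂, hr₂, rfl⟩
    have h₁ : algebraMap K[X] (RatFunc K) r₁ ≠ 0 := algebraMap_ne_zero (by rintro rfl; simp at hr₁)
    have h₂ : algebraMap K[X] (RatFunc K) r₂ ≠ 0 := algebraMap_ne_zero (by rintro rfl; simp at hr₂)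
    refine ⟨p₁ * r₂ + p₂ * r₁, r₁ * r₂, by simp [hr₁, hr₂], ?_⟩
    rw [div_add_div _ _ h₁ h₂]
    simp only [map_mul, map_add]
    ring
  algebraMap_mem' c := ⟨Polynomial.C c, 1, by simp, by simp [algebraMap_C, algebraMap_eq_C]⟩

variable {a : K} {f g : RatFunc K}

theorem div_mem_regularAt (p : K[X]) {r : K[X]} (hr : r.eval a ≠ 0) :
    algebraMap K[X] (RatFunc K) p / algebraMap K[X] (RatFunc K) r ∈ regularAt a :=
  ⟨p, r, hr, rfl⟩

theorem mem_regularAt_iff : f ∈ regularAt a ↔ f.denom.eval a ≠ 0 := by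
  refine ⟨?_, fun hf => ⟨f.num, f.denom, hf, (num_div_denom f).symm⟩⟩
  rintro ⟨p, r, hr, rfl⟩ hpole
  have hdvd : (algebraMap K[X] (RatFunc K) p / algebraMap K[X] (RatFunc K) r).denom ∣ r :=
    (denom_dvd (by rintro rfl; simp at hr)).mpr ⟨p, rfl⟩
  exact hr (eval_eq_zero_of_dvd_of_eval_eq_zero hdvd hpole)

theorem inv_mem_regularAt (hf : f.num.eval a ≠ 0) : f⁻¹ ∈ regularAt a := by
  rw [← num_div_denom f, inv_div]
  exact div_mem_regularAt _ hf

theorem mem_regularAt_of_mul_mem (hg : g.num.eval a ≠ 0) (h : g * f ∈ regularAt a) :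
    f ∈ regularAt a := by
  have hg0 : g ≠ 0 := by rintro rfl; simp at hg
  simpa [hg0] using mul_mem (inv_mem_regularAt hg) h

theorem aeval_inv_X_mul_X_pow (p : K[X]) :
    aeval X⁻¹ p * X ^ p.natDegree = algebraMap K[X] (RatFunc K) p.reverse := by
  let : Invertible (X⁻¹ : RatFunc K) := invertibleOfNonzero (inv_ne_zero X_ne_zero)
  have h := eval₂_reverse_mul_pow (algebraMap K (RatFunc K)) (X⁻¹ : RatFunc K) p
  rw [invOf_eq_inv, inv_inv, ← aeval_def, ← aeval_def, aeval_X_left_eq_algebraMap] at h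
  rw [← h, mul_assoc, ← mul_pow, inv_mul_cancel₀ X_ne_zero, one_pow, mul_one]

theorem map_mem_regularAt {F : Type*} [FunLike F (RatFunc K) (RatFunc K)]
    [AlgHomClass F K (RatFunc K) (RatFunc K)] {ι : F} {c : K} (hι : ι X = C c * X⁻¹)
    (ha : a ≠ 0) (hf : f ∈ regularAt (c / a)) : ι f ∈ regularAt a := by
  obtain ⟨p, r, hr, rfl⟩ := hf
  have hι' (s : K[X]) : ι (algebraMap K[X] (RatFunc K) s) =
      aeval (X⁻¹ : RatFunc K) (s.comp (Polynomial.C c * Polynomial.X)) := by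
    rw [← aeval_X_left_eq_algebraMap, ← aeval_algHom_apply, hι, aeval_comp, map_mul, aeval_C,
      aeval_X, algebraMap_eq_C]
  -- `X ^ deg · r (c / X)` is the reverse of `r (c X)`, which does not vanish at `a`
  rw [map_div₀, hι', hι']
  set p' := p.comp (Polynomial.C c * Polynomial.X)
  set r' := r.comp (Polynomial.C c * Polynomial.X)
  have hr' : r'.reverse.eval a ≠ 0 :=
    eval_reverse_ne_zero ha (by simpa [r', div_eq_mul_inv] using hr)
  have hX (n : ℕ) : (Polynomial.X ^ n : K[X]).eval a ≠ 0 := by simp [ha]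
  have hr'0 : aeval (X⁻¹ : RatFunc K) r' ≠ 0 := by
    intro h
    have : r'.reverse = 0 := algebraMap_injective K (by rw [← aeval_inv_X_mul_X_pow, h]; simp)
    simp [this] at hr'
  convert mul_mem (div_mem_regularAt p'.reverse (hX p'.natDegree))
    (div_mem_regularAt (Polynomial.X ^ r'.natDegree) hr') using 1
  simp only [← aeval_inv_X_mul_X_pow, map_pow, algebraMap_X]
  generalize aeval (X⁻¹ : RatFunc K) r' = v at hr'0 ⊢
  have := X_ne_zero (K := K)
  field_simp

end RatFunc

theorem not_isPole_iff_mem_regularAt {h : RatFunc ℂ} {a : ℂ} :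
    ¬IsPole h a ↔ h ∈ RatFunc.regularAt a :=
  RatFunc.mem_regularAt_iff.symm

theorem IsPole.isZero_or_isPole {γ₁ γ₂ h₁ h₂ : RatFunc ℂ} {ω a : ℂ}
    (hrel : γ₁ * h₁ + γ₂ * h₂ + RatFunc.C ω = 0) (hγ₂ : ¬IsPole γ₂ a) (hh₁ : IsPole h₁ a) :
    IsZero γ₁ a ∨ IsPole h₂ a := by
  by_contra! ⟨hγ₁, hh₂⟩
  refine not_isPole_iff_mem_regularAt.mpr (RatFunc.mem_regularAt_of_mul_mem hγ₁ ?_) hh₁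
  rw [show γ₁ * h₁ = -(γ₂ * h₂ + algebraMap ℂ (RatFunc ℂ) ω) by
    rw [RatFunc.algebraMap_eq_C]; linear_combination hrel]
  rw [not_isPole_iff_mem_regularAt] at hγ₂ hh₂
  exact neg_mem (add_mem (mul_mem hγ₂ hh₂) (Subalgebra.algebraMap_mem _ ω))

theorem IsPole.div_of_map_eq {F : Type*} [FunLike F (RatFunc ℂ) (RatFunc ℂ)]
    [AlgHomClass F ℂ (RatFunc ℂ) (RatFunc ℂ)] {ι : F} {c a : ℂ} {h : RatFunc ℂ}
    (hι : ι RatFunc.X = RatFunc.C c * RatFunc.X⁻¹) (hh : ι h = h) (ha : a ≠ 0)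
    (hpole : IsPole h a) : IsPole h (c / a) := by
  by_contra hreg
  rw [not_isPole_iff_mem_regularAt] at hreg
  exact not_isPole_iff_mem_regularAt.mpr (hh ▸ RatFunc.map_mem_regularAt hι ha hreg) hpole

theorem statement13_general (q : ℂ) (hq : q ≠ 0) (hroot : ∀ n : ℕ, 1 ≤ n → q ^ n ≠ 1)
    (ι₁ ι₂ : RatFunc ℂ ≃ₐ[ℂ] RatFunc ℂ)
    (hι₁ : ι₁ RatFunc.X = RatFunc.X⁻¹)
    (hι₂ : ι₂ RatFunc.X = RatFunc.C q * RatFunc.X⁻¹)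
    (γ₁ γ₂ : RatFunc ℂ) (ω : ℂ)
    (P₁ P₂ P₃ P₄ : ℂ)
    (hz₁ : ∀ a : ℂ, a ≠ 0 → IsZero γ₁ a → a = P₁ ∨ a = P₂)
    (hz₂ : ∀ a : ℂ, a ≠ 0 → IsZero γ₂ a → a = P₃ ∨ a = P₄)
    (hp₁ : ∀ a : ℂ, a ≠ 0 → ¬ IsPole γ₁ a)
    (hp₂ : ∀ a : ℂ, a ≠ 0 → ¬ IsPole γ₂ a)
    (h₁ h₂ : RatFunc ℂ)
    (hrel : γ₁ * h₁ + γ₂ * h₂ + RatFunc.C ω = 0)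
    (hs₁ : ι₁ h₁ = h₁) (hs₂ : ι₂ h₂ = h₂) :
    ((∀ Qm ∈ ({P₁, P₂, q / P₃, q / P₄} : Set ℂ),
        ∀ Qp ∈ ({P₁⁻¹, P₂⁻¹, P₃ / q, P₄ / q} : Set ℂ),
          ∀ n : ℕ, q ^ n * Qm ≠ Qp) →
      ∀ P : ℂ, P ≠ 0 → ¬ IsPole h₁ P) ∧
    ((∀ Qm ∈ ({q * P₁, q * P₂, q / P₃, q / P₄} : Set ℂ),
        ∀ Qp ∈ ({P₁⁻¹, P₂⁻¹, P₃, P₄} : Set ℂ),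
          ∀ n : ℕ, q ^ n * Qm ≠ Qp) →
      ∀ P : ℂ, P ≠ 0 → ¬ IsPole h₂ P) := by
  have hfin (h : RatFunc ℂ) : {a | IsPole h a}.Finite := finite_setOfPred_isRoot h.denom_ne_zero
  have hr₁ (a : ℂ) (ha : a ≠ 0) : IsPole h₁ a → IsPole h₁ (1 / a) :=
    IsPole.div_of_map_eq (by rw [hι₁, map_one, one_mul]) hs₁ ha
  have hr₂ (a : ℂ) (ha : a ≠ 0) : IsPole h₂ a → IsPole h₂ (q / a) :=
    IsPole.div_of_map_eq hι₂ hs₂ ha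
  have h₁₂ (a : ℂ) (ha : a ≠ 0) (h : IsPole h₁ a) : a ∈ ({P₁, P₂} : Set ℂ) ∨ IsPole h₂ a :=
    (h.isZero_or_isPole hrel (hp₂ a ha)).imp_left (hz₁ a ha)
  have h₂₁ (a : ℂ) (ha : a ≠ 0) (h : IsPole h₂ a) : a ∈ ({P₃, P₄} : Set ℂ) ∨ IsPole h₁ a :=
    (h.isZero_or_isPole (by linear_combination hrel) (hp₁ a ha)).imp_left (hz₂ a ha)
  refine ⟨fun hsep P hP hpole => hP ?_, fun hsep P hP hpole => hP ?_⟩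
  · refine eq_zero_of_pole_propagation one_ne_zero hq
      (fun n hn => by simpa [eq_comm] using hroot n hn) (hfin h₁) h₁₂ h₂₁ hr₁ hr₂ ?_ hpole
    intro Qm hm Qp hp n
    simp only [Set.image_pair, Set.union_insert, Set.union_singleton, Set.mem_insert_iff,
      Set.mem_singleton_iff, one_div, one_mul] at hm hp hsep
    simpa using hsep Qm (by tauto) Qp (by tauto) n
  · refine eq_zero_of_pole_propagation hq one_ne_zero (fun n hn => by simpa using hroot n hn)
      (hfin h₂) h₂₁ h₁₂ hr₂ hr₁ ?_ hpole
    intro Qm hm Qp hp n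
    simp only [Set.image_pair, Set.union_insert, Set.union_singleton, Set.mem_insert_iff,
      Set.mem_singleton_iff, one_div, div_one] at hm hp hsep
    simpa [eq_comm] using hsep Qp (by tauto) Qm (by tauto) n

theorem statement13 (q : ℂ) (hq : q ≠ 0) (hroot : ∀ n : ℕ, 1 ≤ n → q ^ n ≠ 1)
    (ι₁ ι₂ : RatFunc ℂ ≃ₐ[ℂ] RatFunc ℂ)
    (hι₁ : ι₁ RatFunc.X = RatFunc.X⁻¹)
    (hι₂ : ι₂ RatFunc.X = RatFunc.C q * RatFunc.X⁻¹)
    (γ₁ γ₂ : RatFunc ℂ) (hγ₁ : γ₁ ≠ 0) (hγ₂ : γ₂ ≠ 0) (ω : ℂ)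
    (P₁ P₂ P₃ P₄ : ℂ) (hP₁ : P₁ ≠ 0) (hP₂ : P₂ ≠ 0) (hP₃ : P₃ ≠ 0) (hP₄ : P₄ ≠ 0)
    (hz₁ : ∀ a : ℂ, a ≠ 0 → IsZero γ₁ a → a = P₁ ∨ a = P₂)
    (hz₂ : ∀ a : ℂ, a ≠ 0 → IsZero γ₂ a → a = P₃ ∨ a = P₄)
    (hp₁ : ∀ a : ℂ, a ≠ 0 → ¬ IsPole γ₁ a)
    (hp₂ : ∀ a : ℂ, a ≠ 0 → ¬ IsPole γ₂ a)
    (h₁ h₂ : RatFunc ℂ)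
    (hrel : γ₁ * h₁ + γ₂ * h₂ + RatFunc.C ω = 0)
    (hs₁ : ι₁ h₁ = h₁) (hs₂ : ι₂ h₂ = h₂) :
    ((∀ Qm ∈ ({P₁, P₂, q / P₃, q / P₄} : Set ℂ),
        ∀ Qp ∈ ({P₁⁻¹, P₂⁻¹, P₃ / q, P₄ / q} : Set ℂ),
          ∀ n : ℕ, q ^ n * Qm ≠ Qp) →
      ∀ P : ℂ, P ≠ 0 → ¬ IsPole h₁ P) ∧
    ((∀ Qm ∈ ({q * P₁, q * P₂, q / P₃, q / P₄} : Set ℂ),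
        ∀ Qp ∈ ({P₁⁻¹, P₂⁻¹, P₃, P₄} : Set ℂ),
          ∀ n : ℕ, q ^ n * Qm ≠ Qp) →
      ∀ P : ℂ, P ≠ 0 → ¬ IsPole h₂ P) :=
  statement13_general q hq hroot ι₁ ι₂ hι₁ hι₂ γ₁ γ₂ ω P₁ P₂ P₃ P₄ hz₁ hz₂ hp₁ hp₂ h₁ h₂ hrel hs₁
    hs₂
end
end

section
/- Let c ∈ ℂ ∖ {0} and Q₀ ∈ ℂ ∖ {0}, and let x ∈ ℂ(s) be the rational function x = c·s/((s − Q₀)(s − Q₀⁻¹)) (so x satisfies x^{ι₁} = x, has simple zeros at 0 and at infinity, and its poles lie in {Q₀, Q₀⁻¹}). Let h ∈ ℂ(s) satisfy h^{ι₁} = h and assume h has no pole at any point of ℂ ∖ {0}. Then there exists a polynomial P ∈ ℂ[X] such that h = P(1/x); in other words, h is a Laurent polynomial in x belonging to ℂ[1/x]. -/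
/-!
Since `h` has no pole off `0`, its denominator is a power of `s`, so `h` is a Laurent polynomial
`p(s)/sⁿ`. Peeling off the outermost terms `a (sⁿ + s⁻ⁿ)`, with `a = p(0)`, lowers `n` and keeps
`ι₁`-invariance, and an invariant polynomial is constant; since `sⁿ + s⁻ⁿ` is a (Dickson) polynomial
in `s + s⁻¹`, every invariant Laurent polynomial lies in `ℂ[s + s⁻¹]`. Finally
`s + s⁻¹ = c x⁻¹ + Q₀ + Q₀⁻¹`, so `ℂ[s + s⁻¹] ⊆ ℂ[x⁻¹]`.
-/

noncomputable section

open Polynomial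

theorem Polynomial.Monic.eq_X_pow_natDegree_of_eval_ne_zero {k : Type*} [Field k] [IsAlgClosed k]
    {p : k[X]} (hp : p.Monic) (hroots : ∀ a : k, a ≠ 0 → p.eval a ≠ 0) :
    p = X ^ p.natDegree := by
  have hzero : p.roots = Multiset.replicate (Multiset.card p.roots) 0 :=
    Multiset.eq_replicate_card.2 fun a ha =>
      by_contra fun ha0 => hroots a ha0 (isRoot_of_mem_roots ha)
  conv_lhs =>
    rw [← prod_multiset_X_sub_C_of_monic_of_roots_card_eq hp IsAlgClosed.card_roots_eq_natDegree,
      hzero]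
  simp [IsAlgClosed.card_roots_eq_natDegree]

theorem pow_add_inv_pow_mem_adjoin {K F : Type*} [Field K] [Field F] [Algebra K F] {t : F}
    (ht : t ≠ 0) (n : ℕ) : t ^ n + t⁻¹ ^ n ∈ Algebra.adjoin K {t + t⁻¹} := by
  rw [Algebra.adjoin_singleton_eq_range_aeval]
  refine ⟨dickson 1 (1 : K) n, ?_⟩
  rw [AlgHom.toRingHom_eq_coe, RingHom.coe_coe, aeval_def, ← eval_map, map_dickson, map_one,
    dickson_one_one_eval_add_inv _ _ (mul_inv_cancel₀ ht)]

namespace RatFunc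

variable {K : Type*} [Field K]

theorem natDegree_eq_zero_of_aeval_inv_eq {p : K[X]}
    (hp : aeval (X⁻¹ : RatFunc K) p = aeval X p) : p.natDegree = 0 := by
  let _ : Invertible (X⁻¹ : RatFunc K) := invertibleOfNonzero (inv_ne_zero X_ne_zero)
  have hrev : aeval (X : RatFunc K) p.reverse = aeval X (p * Polynomial.X ^ p.natDegree) := by
    have := eval₂_reverse_mul_pow (algebraMap K (RatFunc K)) (X⁻¹ : RatFunc K) p
    rw [invOf_eq_inv, inv_inv, ← aeval_def, ← aeval_def, hp, inv_pow,
      mul_inv_eq_iff_eq_mul₀ (pow_ne_zero _ X_ne_zero)] at this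
    simpa using this
  simp only [aeval_X_left_eq_algebraMap] at hrev
  have hdeg := congrArg natDegree (algebraMap_injective K hrev)
  rcases eq_or_ne p 0 with rfl | hp0
  · simp
  rw [natDegree_mul hp0 (pow_ne_zero _ Polynomial.X_ne_zero), natDegree_X_pow] at hdeg
  have := p.reverse_natDegree_le
  omega

theorem aeval_div_X_pow_mem_adjoin_of_invariant (σ : RatFunc K →ₐ[K] RatFunc K)
    (hσ : σ X = X⁻¹) (n : ℕ) (p : K[X])
    (hp : σ (aeval X p / X ^ n) = aeval X p / X ^ n) :
    aeval X p / X ^ n ∈ Algebra.adjoin K {(X + X⁻¹ : RatFunc K)} := by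
  induction n generalizing p with
  | zero =>
    rw [pow_zero, div_one, ← aeval_algHom_apply, hσ] at hp
    rw [pow_zero, div_one, eq_C_of_natDegree_eq_zero (natDegree_eq_zero_of_aeval_inv_eq hp),
      aeval_C]
    exact Subalgebra.algebraMap_mem _ _
  | succ m ih =>
    set a := p.eval 0
    -- subtracting `a (sᵐ⁺¹ + s⁻⁽ᵐ⁺¹⁾)` kills the constant term of `p`, so one power of `s` cancels
    obtain ⟨q, hq⟩ : Polynomial.X ∣ p - Polynomial.C a * (Polynomial.X ^ (2 * (m + 1)) + 1) :=
      X_dvd_iff.mpr (by simp [coeff_zero_eq_eval_zero, a])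
    have hsplit : aeval X p / X ^ (m + 1) =
        aeval X q / X ^ m + algebraMap K (RatFunc K) a * (X ^ (m + 1) + X⁻¹ ^ (m + 1)) := by
      have hpq := congrArg (aeval (X : RatFunc K)) (sub_eq_iff_eq_add.mp hq)
      simp only [map_add, map_mul, map_pow, map_one, aeval_X, aeval_C] at hpq
      rw [hpq, inv_pow]
      field_simp [X_ne_zero]
      ring
    have hv : σ (X ^ (m + 1) + X⁻¹ ^ (m + 1)) = X ^ (m + 1) + X⁻¹ ^ (m + 1) := by
      simp only [map_add, map_pow, map_inv₀, hσ, inv_inv, add_comm]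
    have hq_inv : σ (aeval X q / X ^ m) = aeval X q / X ^ m := by
      rw [hsplit, map_add, map_mul, hv, AlgHom.commutes] at hp
      exact add_right_cancel hp
    rw [hsplit]
    exact Subalgebra.add_mem _ (ih q hq_inv)
      (Subalgebra.mul_mem _ (Subalgebra.algebraMap_mem _ _)
        (pow_add_inv_pow_mem_adjoin X_ne_zero _))

theorem mem_adjoin_of_invariant_of_denom_eq_X_pow (σ : RatFunc K →ₐ[K] RatFunc K)
    (hσ : σ X = X⁻¹) {h : RatFunc K} {n : ℕ} (hden : h.denom = Polynomial.X ^ n) (hh : σ h = h) :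
    h ∈ Algebra.adjoin K {(X + X⁻¹ : RatFunc K)} := by
  have hrep : h = aeval X h.num / X ^ n := by
    conv_lhs => rw [← num_div_denom h]
    rw [hden, map_pow, algebraMap_X, aeval_X_left_eq_algebraMap]
  rw [hrep] at hh ⊢
  exact aeval_div_X_pow_mem_adjoin_of_invariant σ hσ n h.num hh

theorem X_add_X_inv_eq {c Q : K} (hc : c ≠ 0) (hQ : Q ≠ 0) :
    (X + X⁻¹ : RatFunc K) = C c * (C c * X / ((X - C Q) * (X - C Q⁻¹)))⁻¹ + C (Q + Q⁻¹) := by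
  have hsub (b : K) : (X - C b : RatFunc K) ≠ 0 := by
    rw [← algebraMap_X, ← algebraMap_C, ← map_sub]
    exact algebraMap_ne_zero (X_sub_C_ne_zero b)
  have hCQ : (C Q : RatFunc K) ≠ 0 := by simpa using hQ
  have h2 := hsub Q⁻¹
  rw [map_inv₀] at h2
  rw [map_add, map_inv₀]
  field_simp [X_ne_zero, hsub Q, hc]
  ring

end RatFunc

theorem statement14 (c Q₀ : ℂ) (hc : c ≠ 0) (hQ₀ : Q₀ ≠ 0)
    (ι₁ : RatFunc ℂ ≃ₐ[ℂ] RatFunc ℂ)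
    (hι₁ : ι₁ RatFunc.X = RatFunc.X⁻¹)
    (x : RatFunc ℂ)
    (hx : x = RatFunc.C c * RatFunc.X /
      ((RatFunc.X - RatFunc.C Q₀) * (RatFunc.X - RatFunc.C Q₀⁻¹)))
    (h : RatFunc ℂ) (hsym : ι₁ h = h)
    (hpole : ∀ a : ℂ, a ≠ 0 → ¬ IsPole h a) :
    ∃ P : Polynomial ℂ, h = Polynomial.aeval x⁻¹ P := by
  have hden := (RatFunc.monic_denom h).eq_X_pow_natDegree_of_eval_ne_zero hpole
  have hmem := RatFunc.mem_adjoin_of_invariant_of_denom_eq_X_pow ι₁.toAlgHom hι₁ hden hsym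
  have hu : RatFunc.X + RatFunc.X⁻¹ ∈ (aeval (R := ℂ) x⁻¹).range :=
    ⟨C c * X + C (Q₀ + Q₀⁻¹), by simp [hx, RatFunc.X_add_X_inv_eq hc hQ₀]⟩
  obtain ⟨P, hP⟩ := Algebra.adjoin_le (Set.singleton_subset_iff.mpr hu) hmem
  exact ⟨P, hP.symm⟩
end
end

section
/- Let K be a field with an additive valuation v : K → WithTop ℚ, and let d_{1,-1}, d_{-1,1}, d_{1,0}, d_{0,1}, d_{1,1} ∈ K with v(d_{1,-1}) = v(d_{-1,1}) = 0 and v(d_{1,0}) ≥ 0, v(d_{0,1}) ≥ 0, v(d_{1,1}) ≥ 0. Let X, Y : ℕ → K ∖ {0} be sequences satisfying, for all k ≥ 0, Y(k+1) = (d_{-1,1}·X(k)² + d_{0,1}·X(k) + d_{1,1}) / (d_{1,-1}·Y(k)) and X(k+1) = (d_{1,-1}·Y(k+1)² + d_{1,0}·Y(k+1) + d_{1,1}) / (d_{-1,1}·X(k)) (these recurrences encode the action of σ = ι₂∘ι₁ on the coordinates). Suppose v(X(0)) = i and v(Y(0)) = j with i < j < 0 (as rationals), and set δ = j − i. Then for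 every k ≥ 0, v(X(k)) = i − 2δk and v(Y(k)) = j − 2δk. -/
/-!
As long as the valuations stay negative, the term `x²` dominates each numerator, so the
recurrences give `v(Y (k+1)) = 2 v(X k) - v(Y k)` and `v(X (k+1)) = 2 v(Y (k+1)) - v(X k)`.
The arithmetic progressions `i - 2δk`, `j - 2δk` solve this linear system and stay negative.
-/

namespace AddValuation

variable {K Γ : Type*} [Field K] [AddCommGroup Γ] [LinearOrder Γ] [IsOrderedAddMonoid Γ]
  (v : AddValuation K (WithTop Γ))

theorem map_quadratic_of_neg {a b d x : K} (ha : v a = 0) (hb : 0 ≤ v b) (hd : 0 ≤ v d)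
    {c : Γ} (hx : v x = c) (hc : c < 0) :
    v (a * x ^ 2 + b * x + d) = ((c + c : Γ) : WithTop Γ) := by
  have hsq : v (a * x ^ 2) = ((c + c : Γ) : WithTop Γ) := by
    rw [v.map_mul, ha, v.map_pow, hx, zero_add, two_nsmul, WithTop.coe_add]
  have hlin : ((c + c : Γ) : WithTop Γ) < v (b * x) := calc
    ((c + c : Γ) : WithTop Γ) < (0 + c : Γ) := WithTop.coe_lt_coe.2 (add_lt_add_left hc c)
    _ ≤ v b + v x := by rw [hx, WithTop.coe_add]; gcongr; exact_mod_cast hb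
    _ = v (b * x) := (v.map_mul b x).symm
  have hconst : ((c + c : Γ) : WithTop Γ) < v d :=
    lt_of_lt_of_le (WithTop.coe_lt_coe.2 (add_neg hc hc)) hd
  have hdom : v (a * x ^ 2) < v (b * x + d) :=
    hsq ▸ lt_of_lt_of_le (lt_min hlin hconst) (v.map_add _ _)
  rw [add_assoc, v.map_add_eq_of_lt_left hdom, hsq]

theorem map_quadratic_div_of_neg {a b d e x y : K} (ha : v a = 0) (hb : 0 ≤ v b) (hd : 0 ≤ v d)
    (he : v e = 0) {c c' : Γ} (hx : v x = c) (hc : c < 0) (hy : v y = c') :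
    v ((a * x ^ 2 + b * x + d) / (e * y)) = ((c + c - c' : Γ) : WithTop Γ) := by
  rw [v.map_div, v.map_quadratic_of_neg ha hb hd hx hc, v.map_mul, he, hy, zero_add,
    WithTop.LinearOrderedAddCommGroup.coe_sub]

end AddValuation

theorem statement16_general {K : Type*} [Field K] (v : AddValuation K (WithTop ℚ))
    (dpm dmp dpz dzp d11 : K)
    (hpm : v dpm = 0) (hmp : v dmp = 0)
    (hpz : 0 ≤ v dpz) (hzp : 0 ≤ v dzp) (h11 : 0 ≤ v d11)
    (X Y : ℕ → K)
    (hrecY : ∀ k, Y (k + 1) = (dmp * X k ^ 2 + dzp * X k + d11) / (dpm * Y k))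
    (hrecX : ∀ k, X (k + 1) = (dpm * Y (k + 1) ^ 2 + dpz * Y (k + 1) + d11) / (dmp * X k))
    (i j : ℚ) (hvX : v (X 0) = (i : WithTop ℚ)) (hvY : v (Y 0) = (j : WithTop ℚ))
    (hij : i < j) (hj0 : j < 0) :
    ∀ k : ℕ, v (X k) = ((i - 2 * (j - i) * k : ℚ) : WithTop ℚ) ∧
      v (Y k) = ((j - 2 * (j - i) * k : ℚ) : WithTop ℚ) := by
  intro k
  induction k with
  | zero => simpa using ⟨hvX, hvY⟩
  | succ k ih =>
    obtain ⟨ihX, ihY⟩ := ih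
    have hk : (0 : ℚ) ≤ k := k.cast_nonneg
    have hY : v (Y (k + 1)) = ((j - 2 * (j - i) * (k + 1 : ℕ) : ℚ) : WithTop ℚ) := by
      rw [hrecY, v.map_quadratic_div_of_neg hmp hzp h11 hpm ihX (by nlinarith) ihY]
      exact congrArg _ (by push_cast; ring)
    have hX : v (X (k + 1)) = ((i - 2 * (j - i) * (k + 1 : ℕ) : ℚ) : WithTop ℚ) := by
      rw [hrecX, v.map_quadratic_div_of_neg hpm hpz h11 hmp hY (by push_cast; nlinarith) ihX]
      exact congrArg _ (by push_cast; ring)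
    exact ⟨hX, hY⟩

theorem statement16 {K : Type*} [Field K] (v : AddValuation K (WithTop ℚ))
    (dpm dmp dpz dzp d11 : K)
    (hpm : v dpm = 0) (hmp : v dmp = 0)
    (hpz : 0 ≤ v dpz) (hzp : 0 ≤ v dzp) (h11 : 0 ≤ v d11)
    (X Y : ℕ → K) (hX : ∀ k, X k ≠ 0) (hY : ∀ k, Y k ≠ 0)
    (hrecY : ∀ k, Y (k + 1) = (dmp * X k ^ 2 + dzp * X k + d11) / (dpm * Y k))
    (hrecX : ∀ k, X (k + 1) = (dpm * Y (k + 1) ^ 2 + dpz * Y (k + 1) + d11) / (dmp * X k))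
    (i j : ℚ) (hvX : v (X 0) = (i : WithTop ℚ)) (hvY : v (Y 0) = (j : WithTop ℚ))
    (hij : i < j) (hj0 : j < 0) :
    ∀ k : ℕ, v (X k) = ((i - 2 * (j - i) * k : ℚ) : WithTop ℚ) ∧
      v (Y k) = ((j - 2 * (j - i) * k : ℚ) : WithTop ℚ) :=
  statement16_general v dpm dmp dpz dzp d11 hpm hmp hpz hzp h11 X Y hrecY hrecX i j hvX hvY hij hj0
end
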